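/- arXiv:1205.3102 — 7 statements merged into one kernel-verified Lean document; each statement's English description precedes it below -/
import Mathlib

section
/- For every d ≥ 1, the cones 𝔓_{2d} := ⋂_{n≥2d} P^S_{n,2d} and 𝔖_{2d} := ⋂_{n≥2d} Σ^S_{n,2d} are full-dimensional convex cones in ℝ^{π(2d)}; that is, each has nonempty interior in ℝ^{π(2d)}. -/
open MvPolynomial

/-- The i-th normalized power sum `p_i^{(n)} = (1/n)(x_1^i + ⋯ + x_n^i)`. -/
noncomputable def psum (n i : ℕ) : MvPolynomial (Fin n) ℝ :=
  C ((n : ℝ)⁻¹) * ∑ j : Fin n, X j ^ i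

/-- For a partition `λ` of `k`, `p_λ^{(n)} = p_{λ_1}^{(n)} ⋯ p_{λ_l}^{(n)}`. -/
noncomputable def pPart (n : ℕ) {k : ℕ} (lam : Nat.Partition k) : MvPolynomial (Fin n) ℝ :=
  (lam.parts.map (psum n)).prod

/-- The symmetric form `f^{(n)} = Σ_{λ ⊢ k} c_λ p_λ^{(n)}` determined by the
coefficient vector `c`. -/
noncomputable def symForm (n : ℕ) {k : ℕ} (c : Nat.Partition k → ℝ) : MvPolynomial (Fin n) ℝ :=
  ∑ lam : Nat.Partition k, C (c lam) * pPart n lam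

/-- `P^S_{n,2d}`: coefficient vectors whose associated symmetric form in `n`
variables is nonnegative on `ℝ^n`. -/
def PCone (n : ℕ) (k : ℕ) : Set (Nat.Partition k → ℝ) :=
  {c | ∀ x : Fin n → ℝ, 0 ≤ eval x (symForm n c)}

/-- `Σ^S_{n,2d}`: coefficient vectors whose associated symmetric form in `n`
variables is a sum of squares of polynomials. -/
def SCone (n : ℕ) (k : ℕ) : Set (Nat.Partition k → ℝ) :=
  {c | IsSumSq (symForm n c)}

/-!
For each partition `λ ⊢ 2d` we find a form `R_λ`, with coefficients independent of `n`, such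
that `R_λ ± p_λ` are sums of squares in every number of variables. The odd parts of `λ` come in
pairs, and for odd `a, b`
  `p_{a+1} p_{b-1} + p_{a-1} p_{b+1} ± 2 p_a p_b
    = n⁻² ∑_{i,j} (x_i^{(a+1)/2} x_j^{(b-1)/2} ± x_i^{(a-1)/2} x_j^{(b+1)/2})²`,
even power sums are sums of squares, and "`P ± Q` are sums of squares" is stable under products.
Then every `c` with `‖c - ∑_λ R_λ‖_∞ < 1` lies in `𝔖_{2d} ⊆ 𝔓_{2d}`.
-/

theorem IsSumSq.map {R S : Type*} [Semiring R] [Semiring S] {s : R} (hs : IsSumSq s)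
    (f : R →+* S) : IsSumSq (f s) := by
  induction hs with
  | zero => simp
  | sq_add a _ ih => simpa using (IsSumSq.mul_self (f a)).add ih

theorem IsSumSq.smul_of_nonneg {A : Type*} [CommSemiring A] [Algebra ℝ A] {t : ℝ} (ht : 0 ≤ t)
    {p : A} (hp : IsSumSq p) : IsSumSq (t • p) := by
  have ht' : algebraMap ℝ A t = algebraMap ℝ A √t * algebraMap ℝ A √t := by
    rw [← map_mul, Real.mul_self_sqrt ht]
  rw [Algebra.smul_def, ht']
  exact (IsSumSq.mul_self _).mul hp

section

variable {A : Type*} [CommRing A]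

variable (A) in
def SOSDominates (P Q : A) : Prop :=
  IsSumSq (P - Q) ∧ IsSumSq (P + Q)

theorem IsSumSq.sosDominates_self {P : A} (hP : IsSumSq P) : SOSDominates A P P :=
  ⟨by simp, hP.add hP⟩

namespace SOSDominates

variable [Algebra ℝ A]

theorem mul {P Q P' Q' : A} (h : SOSDominates A P Q) (h' : SOSDominates A P' Q') :
    SOSDominates A (P * P') (Q * Q') := by
  have hsub : (P + Q) * (P' - Q') + (P - Q) * (P' + Q') = (2 : ℝ) • (P * P' - Q * Q') := by
    rw [two_smul]; ring
  have hadd : (P + Q) * (P' + Q') + (P - Q) * (P' - Q') = (2 : ℝ) • (P * P' + Q * Q') := by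
    rw [two_smul]; ring
  constructor
  · rw [← inv_smul_smul₀ (two_ne_zero' ℝ) (P * P' - Q * Q'), ← hsub]
    exact ((h.2.mul h'.1).add (h.1.mul h'.2)).smul_of_nonneg (by norm_num)
  · rw [← inv_smul_smul₀ (two_ne_zero' ℝ) (P * P' + Q * Q'), ← hadd]
    exact ((h.2.mul h'.2).add (h.1.mul h'.1)).smul_of_nonneg (by norm_num)

theorem isSumSq_add_smul {P Q : A} (h : SOSDominates A P Q) {t : ℝ} (ht : |t| ≤ 1) :
    IsSumSq (P + t • Q) := by
  obtain ⟨ht₁, ht₂⟩ := abs_le.mp ht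
  have key : P + t • Q = ((1 - t) / 2) • (P - Q) + ((1 + t) / 2) • (P + Q) := by module
  rw [key]
  exact (h.1.smul_of_nonneg (by linarith)).add (h.2.smul_of_nonneg (by linarith))

end SOSDominates

end

theorem AddSubmonoid.interior_nonempty_of_add_single_mem {ι : Type*} [Fintype ι] [DecidableEq ι]
    (S : AddSubmonoid (ι → ℝ)) (r : ι → ι → ℝ)
    (hr : ∀ i t, |t| ≤ 1 → r i + Pi.single i t ∈ S) : (interior (S : Set (ι → ℝ))).Nonempty := by
  refine ⟨∑ i, r i, interior_maximal (fun c hc => ?_) Metric.isOpen_ball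
    (Metric.mem_ball_self one_pos)⟩
  have hc_eq : c = ∑ i, (r i + Pi.single i (c i - (∑ j, r j) i)) := by
    rw [Finset.sum_add_distrib, Finset.univ_sum_single (fun i => c i - (∑ j, r j) i)]
    ext; simp
  rw [hc_eq]
  refine S.sum_mem fun i _ => hr i _ ?_
  rw [← Real.dist_eq]
  exact (dist_le_pi_dist c _ i).trans (Metric.mem_ball.mp hc).le

theorem psum_zero {n : ℕ} (hn : n ≠ 0) : psum n 0 = 1 := by
  simp only [_root_.psum, pow_zero, Finset.sum_const, Finset.card_univ, Fintype.card_fin,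
    nsmul_eq_mul, mul_one]
  rw [← map_natCast C, ← map_mul, inv_mul_cancel₀ (by exact_mod_cast hn), map_one]

section PowerSums

variable (n : ℕ)

theorem isSumSq_psum_two_mul (k : ℕ) : IsSumSq (psum n (2 * k)) := by
  have h : psum n (2 * k) = (n : ℝ)⁻¹ • ∑ j, X j ^ k * X j ^ k := by
    simp only [_root_.psum, smul_eq_C_mul, ← pow_add, ← two_mul]
  rw [h]
  exact (IsSumSq.sum_mul_self _ _).smul_of_nonneg (by positivity)

theorem psum_mul_psum (a b : ℕ) :
    psum n a * psum n b = ((n : ℝ)⁻¹ * (n : ℝ)⁻¹) • ∑ i, ∑ j, X i ^ a * X j ^ b := by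
  rw [_root_.psum, _root_.psum, mul_mul_mul_comm, Finset.sum_mul_sum, smul_eq_C_mul, map_mul]

theorem isSumSq_psum_pair (k m : ℕ) {s : ℝ} (hs : s * s = 1) :
    IsSumSq (psum n (2 * k + 2) * psum n (2 * m) + psum n (2 * k) * psum n (2 * m + 2)
      + (2 * s) • (psum n (2 * k + 1) * psum n (2 * m + 1))) := by
  have h : psum n (2 * k + 2) * psum n (2 * m) + psum n (2 * k) * psum n (2 * m + 2)
      + (2 * s) • (psum n (2 * k + 1) * psum n (2 * m + 1))
      = ((n : ℝ)⁻¹ * (n : ℝ)⁻¹) • ∑ i, ∑ j,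
        (X i ^ (k + 1) * X j ^ m + s • (X i ^ k * X j ^ (m + 1)))
          * (X i ^ (k + 1) * X j ^ m + s • (X i ^ k * X j ^ (m + 1))) := by
    rw [psum_mul_psum, psum_mul_psum, psum_mul_psum, smul_comm, ← smul_add, ← smul_add]
    congr 1
    simp only [Finset.smul_sum, ← Finset.sum_add_distrib]
    refine Finset.sum_congr rfl fun i _ => Finset.sum_congr rfl fun j _ => ?_
    have hC : (C s : MvPolynomial (Fin n) ℝ) * C s = 1 := by rw [← map_mul, hs, map_one]
    simp only [smul_eq_C_mul, map_mul, map_ofNat]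
    linear_combination (-(X i ^ k * X j ^ (m + 1)) ^ 2) * hC
  rw [h]
  exact (IsSumSq.sum fun i _ => IsSumSq.sum_mul_self _ _).smul_of_nonneg (by positivity)

theorem sosDominates_psum_mul_of_odd {a b : ℕ} (ha : Odd a) (hb : Odd b) :
    SOSDominates _
      ((2⁻¹ : ℝ) • (psum n (a + 1) * psum n (b - 1) + psum n (a - 1) * psum n (b + 1)))
      (psum n a * psum n b) := by
  obtain ⟨k, rfl⟩ := ha
  obtain ⟨m, rfl⟩ := hb
  simp only [Nat.add_sub_cancel]
  constructor
  · convert (isSumSq_psum_pair n k m (s := -1) (by norm_num)).smul_of_nonneg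
      (inv_nonneg.mpr zero_le_two) using 1
    module
  · convert (isSumSq_psum_pair n k m (s := 1) (by norm_num)).smul_of_nonneg
      (inv_nonneg.mpr zero_le_two) using 1
    module

end PowerSums

noncomputable def pairCert (a b : ℕ) : MvPolynomial ℕ ℝ :=
  (2⁻¹ : ℝ) • (X (a + 1) * X (b - 1) + X (a - 1) * X (b + 1))

theorem isWeightedHomogeneous_pairCert {a b : ℕ} (ha : 1 ≤ a) (hb : 1 ≤ b) :
    IsWeightedHomogeneous id (pairCert a b) (a + b) := by
  have hX (i j : ℕ) (h : i + j = a + b) :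
      IsWeightedHomogeneous id (X i * X j : MvPolynomial ℕ ℝ) (a + b) :=
    h ▸ (isWeightedHomogeneous_X ℝ id i).mul (isWeightedHomogeneous_X ℝ id j)
  rw [pairCert, smul_eq_C_mul]
  exact ((hX _ _ (by omega)).add (hX _ _ (by omega))).C_mul _

theorem aeval_pairCert (n a b : ℕ) : aeval (psum n) (pairCert a b)
    = (2⁻¹ : ℝ) • (psum n (a + 1) * psum n (b - 1) + psum n (a - 1) * psum n (b + 1)) := by
  simp only [pairCert, map_smul, map_add, map_mul, aeval_X]

theorem exists_isWeightedHomogeneous_sosDominates (m : Multiset ℕ) (hm : Even m.sum) :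
    ∃ F : MvPolynomial ℕ ℝ, IsWeightedHomogeneous id F m.sum ∧
      ∀ n, SOSDominates _ (aeval (psum n) F) (m.map (psum n)).prod := by
  induction m using Multiset.strongInductionOn with
  | ih m ih =>
  by_cases heven : ∃ e ∈ m, Even e
  · obtain ⟨e, he, ⟨k, rfl⟩⟩ := heven
    obtain ⟨m', rfl⟩ := Multiset.exists_cons_of_mem he
    rw [Multiset.sum_cons] at hm ⊢
    obtain ⟨F, hF, hFdom⟩ := ih m' (Multiset.lt_cons_self m' _)
      ((Nat.even_add.mp hm).mp (by simp))
    refine ⟨X (k + k) * F, (isWeightedHomogeneous_X ℝ id _).mul hF, fun n => ?_⟩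
    rw [Multiset.map_cons, Multiset.prod_cons, map_mul, aeval_X, ← two_mul]
    exact (isSumSq_psum_two_mul n k).sosDominates_self.mul (hFdom n)
  have hodd : ∀ x ∈ m, Odd x := fun x hx => Nat.not_even_iff_odd.mp fun h => heven ⟨x, hx, h⟩
  rcases Multiset.empty_or_exists_mem m with rfl | ⟨a, ha⟩
  · exact ⟨1, isWeightedHomogeneous_one ℝ id, fun n => by simpa using IsSumSq.one.sosDominates_self⟩
  obtain ⟨m', rfl⟩ := Multiset.exists_cons_of_mem ha
  rcases Multiset.empty_or_exists_mem m' with rfl | ⟨b, hb⟩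
  · simp [Nat.not_even_iff_odd.mpr (hodd a ha)] at hm
  obtain ⟨m'', rfl⟩ := Multiset.exists_cons_of_mem hb
  have hodd_a := hodd a ha
  have hodd_b := hodd b (by simp)
  simp only [Multiset.sum_cons] at hm ⊢
  obtain ⟨F, hF, hFdom⟩ := ih m'' ((Multiset.lt_cons_self _ _).trans (Multiset.lt_cons_self _ _))
    (by rw [Nat.even_iff] at hm ⊢; rw [Nat.odd_iff] at hodd_a hodd_b; omega)
  refine ⟨pairCert a b * F,
    add_assoc a b _ ▸ (isWeightedHomogeneous_pairCert hodd_a.pos hodd_b.pos).mul hF, fun n => ?_⟩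
  rw [Multiset.map_cons, Multiset.map_cons, Multiset.prod_cons, Multiset.prod_cons, ← mul_assoc,
    map_mul, aeval_pairCert]
  exact (sosDominates_psum_mul_of_odd n hodd_a hodd_b).mul (hFdom n)

theorem Finsupp.prod_toMultiset_map {α M : Type*} [CommMonoid M] (s : α →₀ ℕ) (f : α → M) :
    (s.toMultiset.map f).prod = s.prod fun i k => f i ^ k := by
  rw [Finsupp.toMultiset_map, Finsupp.prod_toMultiset, Finsupp.prod_mapDomain_index pow_zero pow_add]

-- `X 0` evaluates to `p_0 = 1`, so zero parts are dropped; junk unless `s` has weight `K`.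
noncomputable def monomialPartition (K : ℕ) (s : ℕ →₀ ℕ) : Nat.Partition K :=
  if h : s.toMultiset.sum = K then .ofSums K s.toMultiset h else .indiscrete K

noncomputable def partitionCoeff (K : ℕ) (F : MvPolynomial ℕ ℝ) (μ : Nat.Partition K) : ℝ :=
  ∑ s ∈ F.support with monomialPartition K s = μ, coeff s F

theorem pPart_monomialPartition {n K : ℕ} (hn : n ≠ 0) {s : ℕ →₀ ℕ}
    (hs : s.toMultiset.sum = K) :
    pPart n (monomialPartition K s) = aeval (psum n) (monomial s (1 : ℝ)) := by
  have hzero : ((s.toMultiset.filter (· = 0)).map (psum n)).prod = 1 :=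
    Multiset.prod_eq_one fun x hx => by
      obtain ⟨i, hi, rfl⟩ := Multiset.mem_map.mp hx
      rw [(Multiset.mem_filter.mp hi).2, psum_zero hn]
  rw [monomialPartition, dif_pos hs, pPart, Nat.Partition.ofSums_parts, aeval_monomial, map_one,
    one_mul, ← Finsupp.prod_toMultiset_map]
  conv_rhs => rw [← Multiset.filter_add_not (· = 0) s.toMultiset, Multiset.map_add,
    Multiset.prod_add, hzero, one_mul]

theorem symForm_partitionCoeff {n K : ℕ} (hn : n ≠ 0) {F : MvPolynomial ℕ ℝ}
    (hF : IsWeightedHomogeneous id F K) :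
    symForm n (partitionCoeff K F) = aeval (psum n) F := by
  have hfiber (μ : Nat.Partition K) : C (partitionCoeff K F μ) * pPart n μ
      = ∑ s ∈ F.support with monomialPartition K s = μ,
          C (coeff s F) * pPart n (monomialPartition K s) := by
    rw [partitionCoeff, map_sum, Finset.sum_mul]
    exact Finset.sum_congr rfl fun s hs => by rw [(Finset.mem_filter.mp hs).2]
  have hweight {s : ℕ →₀ ℕ} (hs : s ∈ F.support) : s.toMultiset.sum = K := by
    rw [Finsupp.sum_toMultiset, ← hF (mem_support_iff.mp hs), Finsupp.weight_apply]
    rfl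
  conv_rhs => rw [F.as_sum, map_sum]
  rw [symForm, Finset.sum_congr rfl fun μ _ => hfiber μ, Finset.sum_fiberwise]
  refine Finset.sum_congr rfl fun s hs => ?_
  rw [pPart_monomialPartition hn (hweight hs), ← algebraMap_eq, ← Algebra.smul_def,
    ← map_smul, smul_monomial, smul_eq_mul, mul_one]

section SymForm

variable (n : ℕ) {K : ℕ}

theorem symForm_zero : symForm n (0 : Nat.Partition K → ℝ) = 0 := by
  simp [symForm]

theorem symForm_add (c c' : Nat.Partition K → ℝ) :
    symForm n (c + c') = symForm n c + symForm n c' := by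
  simp only [symForm, Pi.add_apply, map_add, add_mul, Finset.sum_add_distrib]

theorem symForm_single (μ : Nat.Partition K) (t : ℝ) :
    symForm n (Pi.single μ t) = t • pPart n μ := by
  rw [symForm, Finset.sum_eq_single μ (fun ν _ hν => by simp [hν]) (by simp), Pi.single_eq_same,
    smul_eq_C_mul]

end SymForm

theorem exists_symForm_sosDominates {K : ℕ} (hK : Even K) (μ : Nat.Partition K) :
    ∃ r : Nat.Partition K → ℝ, ∀ n ≠ 0, SOSDominates _ (symForm n r) (pPart n μ) := by
  obtain ⟨F, hF, hFdom⟩ :=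
    exists_isWeightedHomogeneous_sosDominates μ.parts (by rwa [μ.parts_sum])
  refine ⟨partitionCoeff K F, fun n hn => ?_⟩
  rw [symForm_partitionCoeff hn (by rwa [μ.parts_sum] at hF)]
  exact hFdom n

def sumSqCone (K : ℕ) : AddSubmonoid (Nat.Partition K → ℝ) where
  carrier := {c | ∀ n ≠ 0, IsSumSq (symForm n c)}
  add_mem' hc hc' n hn := by
    rw [symForm_add]
    exact (hc n hn).add (hc' n hn)
  zero_mem' n _ := by
    rw [symForm_zero]
    exact IsSumSq.zero

theorem mem_sumSqCone {K : ℕ} {c : Nat.Partition K → ℝ} :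
    c ∈ sumSqCone K ↔ ∀ n ≠ 0, IsSumSq (symForm n c) :=
  Iff.rfl

/-- The cones `𝔓_{2d} = ⋂_{n≥2d} P^S_{n,2d}` and `𝔖_{2d} = ⋂_{n≥2d} Σ^S_{n,2d}`
are full-dimensional in `ℝ^{π(2d)}`, i.e. have nonempty interior. -/
theorem fullDim_limit_cones (d : ℕ) (hd : 1 ≤ d) :
    (interior (⋂ n ∈ {n : ℕ | 2 * d ≤ n}, PCone n (2 * d))).Nonempty ∧
    (interior (⋂ n ∈ {n : ℕ | 2 * d ≤ n}, SCone n (2 * d))).Nonempty := by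
  choose r hr using exists_symForm_sosDominates (even_two_mul d)
  have hcone : (interior (sumSqCone (2 * d) : Set (Nat.Partition (2 * d) → ℝ))).Nonempty :=
    (sumSqCone _).interior_nonempty_of_add_single_mem r fun μ t ht => mem_sumSqCone.mpr
      fun n hn => by
        rw [symForm_add, symForm_single]
        exact (hr μ n hn).isSumSq_add_smul ht
  have hS : (sumSqCone (2 * d) : Set (Nat.Partition (2 * d) → ℝ))
      ⊆ ⋂ n ∈ {n : ℕ | 2 * d ≤ n}, SCone n (2 * d) :=
    fun c hc => Set.mem_iInter₂.mpr fun n hn => mem_sumSqCone.mp hc n (by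
      rw [Set.mem_ofPred_eq] at hn; omega)
  have hSP : ⋂ n ∈ {n : ℕ | 2 * d ≤ n}, SCone n (2 * d)
      ⊆ ⋂ n ∈ {n : ℕ | 2 * d ≤ n}, PCone n (2 * d) :=
    Set.iInter₂_mono fun n _ c hc x => (hc.map (eval x)).nonneg
  exact ⟨hcone.mono (interior_mono (hS.trans hSP)), hcone.mono (interior_mono hS)⟩
end

section
/- Let d ≥ 2 and let c = (c_λ)_{λ⊢2d} be a coefficient vector. Then the symmetric form f^{(n)} = Σ_{λ⊢2d} c_λ p_λ^{(n)} is nonnegative on ℝ^n for every n ≥ 2d if and only if the 2d-variate polynomial Φ_c(s,t) is nonnegative on Δ × ℝ^d, where Δ := {α ∈ [0,1]^d : α_1 + ⋯ + α_d = 1} is the standard simplex in ℝ^d. -/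
/-!
Both sides are the same expression `Σ_λ c_λ ∏_i m_{λ_i}` evaluated at moment sequences `m`: for
`f^{(n)}(x)` the moments of the empirical measure of `x`, for `Φ_c(s, t)` those of the atomic
measure `Σ_j s_j δ_{t_j}`. An atomic probability measure with weights `k_j / N` is the empirical
measure of a sample of size `N`, and such weights are dense in the simplex, so nonnegativity of all
`f^{(n)}` passes to `Φ_c` by continuity. Conversely, Gaussian quadrature replaces the empirical
measure of any `x` by a measure with at most `d` atoms (the zeros of the degree-`d` orthogonal
polynomial) having the same moments up to order `2d - 1` and a smaller moment of order `2d`. Only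
`λ = (2d)` involves the moment of order `2d`, and `c_{(2d)} ≥ 0` (evaluate `Φ_c` at
`s = (1 - ε, ε, 0, …)`, `t = (0, 1, 0, …)`, divide by `ε` and let `ε → 0`), so
`f^{(n)}(x) ≥ Φ_c(s, t) ≥ 0`.
-/

open MvPolynomial

/-- `Φ_λ(s,t) = ∏_{i=1}^l (s_1 t_1^{λ_i} + ⋯ + s_d t_d^{λ_i})` for a partition
`λ = (λ_1,…,λ_l)` of `k`, as a function on `ℝ^d × ℝ^d`. -/
noncomputable def phiPart {k : ℕ} (d : ℕ) (lam : Nat.Partition k) (s t : Fin d → ℝ) : ℝ :=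
  (lam.parts.map (fun i => ∑ j : Fin d, s j * t j ^ i)).prod

/-- `Φ_c = Σ_{λ ⊢ k} c_λ Φ_λ`. -/
noncomputable def phiForm {k : ℕ} (d : ℕ) (c : Nat.Partition k → ℝ) (s t : Fin d → ℝ) : ℝ :=
  ∑ lam : Nat.Partition k, c lam * phiPart d lam s t

open Finset Filter Topology

namespace Nat.Partition

variable {k : ℕ}

theorem eq_indiscrete_of_mem_parts {p : Partition k} (h : k ∈ p.parts) : p = indiscrete k := by
  have hsum := p.parts_sum
  rw [← Multiset.cons_erase h, Multiset.sum_cons, add_eq_left, Multiset.sum_eq_zero_iff] at hsum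
  have hrest : p.parts.erase k = 0 := Multiset.eq_zero_of_forall_notMem fun a ha =>
    (p.parts_pos (Multiset.mem_of_mem_erase ha)).ne' (hsum a ha)
  ext1
  rw [indiscrete_parts (p.parts_pos h).ne', ← Multiset.cons_erase h, hrest]
  rfl

theorem lt_of_mem_parts_of_ne_indiscrete {p : Partition k} (hp : p ≠ indiscrete k) {a : ℕ}
    (ha : a ∈ p.parts) : a < k :=
  (le_of_mem_parts ha).lt_of_ne fun h => hp (eq_indiscrete_of_mem_parts (h ▸ ha))

theorem card_parts_pos (hk : k ≠ 0) (p : Partition k) : 0 < Multiset.card p.parts :=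
  Multiset.card_pos.mpr fun h => hk (by rw [← p.parts_sum, h, Multiset.sum_zero])

theorem eq_indiscrete_of_card_parts_eq_one {p : Partition k} (h : Multiset.card p.parts = 1) :
    p = indiscrete k := by
  obtain ⟨a, ha⟩ := Multiset.card_eq_one.mp h
  have hak : a = k := by simpa [ha] using p.parts_sum
  exact eq_indiscrete_of_mem_parts (by simp [ha, hak])

end Nat.Partition

noncomputable def weightedMoment {ι : Type*} [Fintype ι] (w x : ι → ℝ) (i : ℕ) : ℝ :=
  ∑ j, w j * x j ^ i

noncomputable def momentForm {k : ℕ} (c : Nat.Partition k → ℝ) (m : ℕ → ℝ) : ℝ :=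
  ∑ p, c p * (p.parts.map m).prod

theorem eval_symForm (n : ℕ) {k : ℕ} (c : Nat.Partition k → ℝ) (x : Fin n → ℝ) :
    eval x (symForm n c) = momentForm c (weightedMoment (fun _ => (n : ℝ)⁻¹) x) := by
  have hpsum : ∀ i, eval x (psum n i) = weightedMoment (fun _ => (n : ℝ)⁻¹) x i := fun i => by
    simp [_root_.psum, weightedMoment, Finset.mul_sum]
  simp only [symForm, pPart, momentForm, map_sum, map_mul, eval_C, map_multiset_prod,
    Multiset.map_map, Function.comp_def, hpsum]

theorem phiForm_eq_momentForm {k : ℕ} (d : ℕ) (c : Nat.Partition k → ℝ) (s t : Fin d → ℝ) :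
    phiForm d c s t = momentForm c (weightedMoment s t) := rfl

theorem momentForm_le_momentForm {k : ℕ} (hk : k ≠ 0) {c : Nat.Partition k → ℝ}
    (hc : 0 ≤ c (.indiscrete k)) {m m' : ℕ → ℝ} (hlow : ∀ i < k, m i = m' i)
    (htop : m k ≤ m' k) : momentForm c m ≤ momentForm c m' := by
  refine sum_le_sum fun p _ => ?_
  by_cases hp : p = .indiscrete k
  · subst hp
    simpa [Nat.Partition.indiscrete_parts hk] using mul_le_mul_of_nonneg_left htop hc
  · rw [Multiset.map_congr rfl fun i hi => hlow i (p.lt_of_mem_parts_of_ne_indiscrete hp hi)]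

theorem momentForm_of_forall_pos_eq {k : ℕ} (c : Nat.Partition k → ℝ) {m : ℕ → ℝ} {e : ℝ}
    (hm : ∀ i, 0 < i → m i = e) :
    momentForm c m = ∑ p, c p * e ^ Multiset.card p.parts := by
  refine sum_congr rfl fun p _ => ?_
  rw [Multiset.map_congr rfl fun i hi => hm i (p.parts_pos hi), Multiset.map_const',
    Multiset.prod_replicate]

theorem nonneg_indiscrete_of_sum_pow_card_parts_nonneg {k : ℕ} (hk : k ≠ 0)
    (c : Nat.Partition k → ℝ)
    (h : ∀ e ∈ Set.Ioc (0 : ℝ) 1, 0 ≤ ∑ p, c p * e ^ Multiset.card p.parts) :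
    0 ≤ c (.indiscrete k) := by
  let G : ℝ → ℝ := fun e => ∑ p, c p * e ^ (Multiset.card p.parts - 1)
  have hG : ∀ e, e * G e = ∑ p, c p * e ^ Multiset.card p.parts := fun e => by
    rw [mul_sum]
    refine sum_congr rfl fun p _ => ?_
    rw [mul_left_comm, ← pow_succ', Nat.sub_add_cancel (p.card_parts_pos hk)]
  have hG0 : G 0 = c (.indiscrete k) := by
    dsimp only [G]
    rw [sum_eq_single (Nat.Partition.indiscrete k)]
    · simp [Nat.Partition.indiscrete_parts hk]
    · intro p _ hp
      have := p.card_parts_pos hk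
      have : Multiset.card p.parts ≠ 1 := fun h => hp (p.eq_indiscrete_of_card_parts_eq_one h)
      rw [zero_pow (by omega), mul_zero]
    · simp
  have hcont : Continuous G := by fun_prop
  rw [← hG0]
  refine ge_of_tendsto (hcont.continuousWithinAt (s := Set.Ioi 0)) ?_
  filter_upwards [Ioc_mem_nhdsGT (zero_lt_one' ℝ)] with e he
  exact nonneg_of_mul_nonneg_right (by rw [hG]; exact h e he) he.1

theorem exists_mem_stdSimplex_weightedMoment_eq {ι : Type*} [Fintype ι] [DecidableEq ι]
    {j₀ j₁ : ι} (hj : j₀ ≠ j₁) {e : ℝ} (he : e ∈ Set.Icc (0 : ℝ) 1) :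
    ∃ s ∈ stdSimplex ℝ ι, ∃ t : ι → ℝ, ∀ i, 0 < i → weightedMoment s t i = e := by
  refine ⟨Pi.single j₀ (1 - e) + Pi.single j₁ e, ⟨fun j => ?_, ?_⟩, Pi.single j₁ 1,
    fun i hi => ?_⟩
  · by_cases h₀ : j = j₀ <;> by_cases h₁ : j = j₁ <;> simp_all
  · simp [sum_add_distrib]
  · simp [weightedMoment, Pi.single_apply, hj.symm, zero_pow hi.ne']

theorem nonneg_indiscrete_of_phiForm_nonneg {k d : ℕ} (hk : k ≠ 0) (hd : 2 ≤ d)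
    {c : Nat.Partition k → ℝ} (hphi : ∀ s ∈ stdSimplex ℝ (Fin d), ∀ t, 0 ≤ phiForm d c s t) :
    0 ≤ c (.indiscrete k) := by
  refine nonneg_indiscrete_of_sum_pow_card_parts_nonneg hk c fun e he => ?_
  obtain ⟨s, hs, t, hm⟩ := exists_mem_stdSimplex_weightedMoment_eq
    (j₀ := (⟨0, by omega⟩ : Fin d)) (j₁ := ⟨1, by omega⟩) (by simp) (Set.Ioc_subset_Icc_self he)
  simpa [phiForm_eq_momentForm, momentForm_of_forall_pos_eq c hm] using hphi s hs t

theorem continuous_momentForm_weightedMoment {ι : Type*} [Fintype ι] {k : ℕ}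
    (c : Nat.Partition k → ℝ) (t : ι → ℝ) :
    Continuous fun s => momentForm c (weightedMoment s t) := by
  unfold momentForm weightedMoment
  fun_prop

theorem exists_weightedMoment_eq_of_multiplicities {ι : Type*} [Fintype ι] (k : ι → ℕ) (t : ι → ℝ) :
    ∃ x : Fin (∑ j, k j) → ℝ, ∀ i, weightedMoment (fun _ => ((∑ j, k j : ℕ) : ℝ)⁻¹) x i =
      weightedMoment (fun j => (k j : ℝ) / (∑ j, k j : ℕ)) t i := by
  let e : Fin (∑ j, k j) ≃ Σ j, Fin (k j) := (Fintype.equivFinOfCardEq (by simp)).symm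
  refine ⟨fun a => t (e a).1, fun i => ?_⟩
  simp only [weightedMoment, ← Finset.mul_sum, div_eq_inv_mul, mul_assoc]
  congr 1
  rw [Equiv.sum_comp e (fun p => t p.1 ^ i), Fintype.sum_sigma]
  simp

theorem tendsto_floor_mul_div_sum_floor {ι : Type*} [Fintype ι] {s : ι → ℝ}
    (hs : s ∈ stdSimplex ℝ ι) :
    Tendsto (fun r : ℝ => fun j => (⌊s j * r⌋₊ : ℝ) / (∑ j', ⌊s j' * r⌋₊ : ℕ)) atTop (𝓝 s) := by
  have hfloor : ∀ j, Tendsto (fun r : ℝ => (⌊s j * r⌋₊ : ℝ) / r) atTop (𝓝 (s j)) :=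
    fun j => tendsto_nat_floor_mul_div_atTop (hs.1 j)
  have htotal : Tendsto (fun r : ℝ => ((∑ j, ⌊s j * r⌋₊ : ℕ) : ℝ) / r) atTop (𝓝 1) := by
    simpa [sum_div, hs.2] using tendsto_finsetSum univ fun j _ => hfloor j
  refine tendsto_pi_nhds.mpr fun j => ?_
  refine ((hfloor j).div htotal one_ne_zero).congr' ?_ |>.trans (by rw [div_one])
  filter_upwards [eventually_gt_atTop 0] with r hr
  exact div_div_div_cancel_right₀ hr.ne' _ _

theorem sub_card_le_sum_floor_mul {ι : Type*} [Fintype ι] {s : ι → ℝ} (hs : s ∈ stdSimplex ℝ ι)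
    (r : ℝ) : r - Fintype.card ι ≤ (∑ j, ⌊s j * r⌋₊ : ℕ) := by
  have h := sum_le_sum fun j (_ : j ∈ univ) => (Nat.lt_floor_add_one (s j * r)).le
  rw [sum_add_distrib, ← sum_mul, hs.2, one_mul, sum_const, card_univ, nsmul_one] at h
  push_cast
  linarith

theorem phiForm_nonneg_of_forall_symForm_nonneg {k m d : ℕ} (c : Nat.Partition k → ℝ)
    (hf : ∀ n, m ≤ n → ∀ x : Fin n → ℝ, 0 ≤ eval x (symForm n c))
    {s : Fin d → ℝ} (hs : s ∈ stdSimplex ℝ (Fin d)) (t : Fin d → ℝ) : 0 ≤ phiForm d c s t := by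
  have hlim := ((continuous_momentForm_weightedMoment c t).tendsto s).comp
    (tendsto_floor_mul_div_sum_floor hs)
  refine ge_of_tendsto hlim ?_
  filter_upwards [eventually_ge_atTop ((m + d : ℕ) : ℝ)] with r hr
  obtain ⟨x, hx⟩ := exists_weightedMoment_eq_of_multiplicities (fun j => ⌊s j * r⌋₊) t
  have hsize : m ≤ ∑ j, ⌊s j * r⌋₊ := by
    have := sub_card_le_sum_floor_mul hs r
    rw [Fintype.card_fin] at this
    push_cast at hr
    exact_mod_cast (by linarith : (m : ℝ) ≤ (∑ j, ⌊s j * r⌋₊ : ℕ))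
  have := hf _ hsize x
  rwa [eval_symForm, funext hx] at this

namespace Polynomial

theorem eval_nonneg_of_even_rootMultiplicity {F : ℝ[X]} (hlc : 0 ≤ F.leadingCoeff)
    (hF : ∀ z, Even (F.rootMultiplicity z)) (y : ℝ) : 0 ≤ F.eval y := by
  induction hd : F.natDegree using Nat.strong_induction_on generalizing F with
  | _ k ih =>
  by_cases hroot : ∃ z, F.IsRoot z
  · obtain ⟨z, hz⟩ := hroot
    rcases eq_or_ne F 0 with rfl | hF0
    · simp
    have htwo : 2 ≤ F.rootMultiplicity z := by
      obtain ⟨m, hm⟩ := hF z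
      have := (rootMultiplicity_pos hF0).mpr hz
      omega
    obtain ⟨G, rfl⟩ := (pow_dvd_pow (X - C z) htwo).trans (pow_rootMultiplicity_dvd F z)
    have hmonic : ((X - C z) ^ 2).Monic := (monic_X_sub_C z).pow 2
    have hGeven : ∀ z', Even (G.rootMultiplicity z') := fun z' => by
      have h := hF z'
      rw [rootMultiplicity_mul hF0, ← count_roots ((X - C z) ^ 2), roots_pow, roots_X_sub_C,
        Multiset.count_nsmul] at h
      exact (Nat.even_add.mp h).mp (even_two_mul _)
    have hGdeg : G.natDegree < k := by
      rw [← hd, hmonic.natDegree_mul' (right_ne_zero_of_mul hF0), natDegree_pow,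
        natDegree_X_sub_C]
      omega
    rw [eval_mul]
    refine mul_nonneg (by simp [sq_nonneg]) (ih _ hGdeg ?_ hGeven rfl)
    rwa [leadingCoeff_mul, hmonic.leadingCoeff, one_mul] at hlc
  · push Not at hroot
    exact (zero_lt_eval_of_roots_lt_of_leadingCoeff_nonneg (fun w hw => absurd hw (hroot w))
      hlc).le

noncomputable def oddRoots (P : ℝ[X]) : Finset ℝ :=
  P.roots.toFinset.filter fun z => Odd (P.rootMultiplicity z)

theorem mem_oddRoots {P : ℝ[X]} (hP : P ≠ 0) {z : ℝ} :
    z ∈ P.oddRoots ↔ P.IsRoot z ∧ Odd (P.rootMultiplicity z) := by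
  rw [oddRoots, mem_filter, Multiset.mem_toFinset, mem_roots hP]

theorem card_oddRoots_le (P : ℝ[X]) : #P.oddRoots ≤ P.natDegree :=
  (card_filter_le _ _).trans ((Multiset.toFinset_card_le _).trans (card_roots' P))

theorem eval_mul_nodal_oddRoots_nonneg {P : ℝ[X]} (hP : P.Monic) (y : ℝ) :
    0 ≤ (P * Lagrange.nodal P.oddRoots id).eval y := by
  have hmonic : (P * Lagrange.nodal P.oddRoots id).Monic := hP.mul Lagrange.nodal_monic
  refine eval_nonneg_of_even_rootMultiplicity (by simp [hmonic.leadingCoeff]) (fun z => ?_) y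
  rw [rootMultiplicity_mul hmonic.ne_zero, ← count_roots (Lagrange.nodal _ _), Lagrange.nodal_eq]
  simp only [id, roots_prod_X_sub_C]
  rw [Multiset.count_eq_of_nodup P.oddRoots.nodup]
  by_cases hz : z ∈ P.oddRoots
  · simpa [hz] using ((mem_oddRoots hP.ne_zero).mp hz).2.add_one
  · rw [if_neg (by simpa using hz), add_zero]
    refine Nat.not_odd_iff_even.mp fun hodd => hz ((mem_oddRoots hP.ne_zero).mpr ⟨?_, hodd⟩)
    exact (rootMultiplicity_pos hP.ne_zero).mp hodd.pos

section Field

variable {K : Type*} [Field K]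

theorem exists_monic_orthogonal (L : K[X] →ₗ[K] K) (d : ℕ)
    (hL : ∀ h ∈ degreeLT K d, L (h * h) = 0 → h = 0) :
    ∃ P : K[X], P.Monic ∧ P.natDegree = d ∧ ∀ g ∈ degreeLT K d, L (P * g) = 0 := by
  let V := degreeLT K d
  let B : LinearMap.BilinForm K V :=
    ((LinearMap.mul K K[X]).compl₁₂ V.subtype V.subtype).compr₂ L
  have hB : B.Nondegenerate := .ofSeparatingLeft fun h hh => Subtype.ext (hL h h.2 (hh h))
  let ψ : Module.Dual K V := L ∘ₗ LinearMap.mulLeft K (X ^ d) ∘ₗ V.subtype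
  let h : K[X] := (B.toDual hB).symm ψ
  have hdeg : h.degree < d := mem_degreeLT.mp ((B.toDual hB).symm ψ).2
  refine ⟨X ^ d - h, monic_X_pow_sub hdeg,
    natDegree_eq_of_degree_eq_some ((degree_sub_eq_left_of_degree_lt (by rwa [degree_X_pow])).trans
      (degree_X_pow d)), fun g hg => ?_⟩
  have := LinearMap.BilinForm.apply_toDual_symm_apply (hB := hB) ψ ⟨g, hg⟩
  change L (h * g) = L (X ^ d * g) at this
  rw [sub_mul, map_sub, this, sub_self]

variable [DecidableEq K] {L : K[X] →ₗ[K] K} {P : K[X]} {S : Finset K}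

theorem map_eq_sum_lagrange_basis (hP : P.Monic) (hPd : P.natDegree = #S)
    (horth : ∀ g ∈ degreeLT K #S, L (P * g) = 0) (hroot : ∀ z ∈ S, P.IsRoot z) {q : K[X]}
    (hq : q.degree < ↑(2 * #S)) :
    L q = ∑ z ∈ S, L (Lagrange.basis S id z) * q.eval z := by
  have hrem : q %ₘ P = Lagrange.interpolate S id fun z => q.eval z := by
    refine Lagrange.eq_interpolate_of_eval_eq _ (Set.injOn_id _) ?_ fun z hz => ?_
    · simpa [degree_eq_natDegree hP.ne_zero, hPd] using degree_modByMonic_lt q hP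
    · rw [id, modByMonic_eq_sub_mul_div q P, eval_sub, eval_mul, hroot z hz, zero_mul, sub_zero]
  have hquot : q /ₘ P ∈ degreeLT K #S := by
    rcases eq_or_ne q 0 with rfl | hq0
    · simp
    rw [mem_degreeLT]
    refine degree_le_natDegree.trans_lt ?_
    rw [natDegree_divByMonic q hP, hPd]
    have := (natDegree_lt_iff_degree_lt hq0).mpr hq
    exact_mod_cast (by omega : q.natDegree - #S < #S)
  conv_lhs => rw [← modByMonic_add_div q P, map_add, horth _ hquot, add_zero, hrem,
    Lagrange.interpolate_apply, map_sum]
  refine sum_congr rfl fun z _ => ?_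
  rw [← smul_eq_C_mul, map_smul, smul_eq_mul, mul_comm]

theorem map_lagrange_basis_nonneg [LE K] (hL : ∀ p, 0 ≤ L (p * p)) (hP : P.Monic)
    (hPd : P.natDegree = #S) (horth : ∀ g ∈ degreeLT K #S, L (P * g) = 0)
    (hroot : ∀ z ∈ S, P.IsRoot z) {z : K} (hz : z ∈ S) : 0 ≤ L (Lagrange.basis S id z) := by
  have hinj : Set.InjOn id (S : Set K) := Set.injOn_id _
  set b := Lagrange.basis S id z
  have hdeg : (b * b).degree < ↑(2 * #S) := by
    refine degree_le_natDegree.trans_lt ?_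
    have := natDegree_mul_le (p := b) (q := b)
    rw [Lagrange.natDegree_basis hinj hz] at this
    have := card_pos.mpr ⟨z, hz⟩
    exact_mod_cast (by omega : (b * b).natDegree < 2 * #S)
  have hself : L (b * b) = L b := by
    rw [map_eq_sum_lagrange_basis hP hPd horth hroot hdeg, sum_eq_single z]
    · have hb : b.eval z = 1 := Lagrange.eval_basis_self hinj hz
      rw [eval_mul, hb, mul_one, mul_one]
    · intro z' hz' hne
      have hb : b.eval z' = 0 := Lagrange.eval_basis_of_ne (v := id) hne.symm hz'
      rw [eval_mul, hb, zero_mul, mul_zero]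
    · exact fun h => absurd hz h
  exact hself ▸ hL b

theorem sum_lagrange_basis_mul_pow_le [PartialOrder K] [IsOrderedAddMonoid K]
    (hL : ∀ p, 0 ≤ L (p * p)) (hP : P.Monic)
    (hPd : P.natDegree = #S) (horth : ∀ g ∈ degreeLT K #S, L (P * g) = 0)
    (hroot : ∀ z ∈ S, P.IsRoot z) :
    ∑ z ∈ S, L (Lagrange.basis S id z) * z ^ (2 * #S) ≤ L (X ^ (2 * #S)) := by
  have hPP : (P * P).Monic := hP.mul hP
  have hdeg : (X ^ (2 * #S) - P * P).degree < ↑(2 * #S) := by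
    have hPPdeg : (P * P).degree = ↑(2 * #S) := by
      rw [degree_eq_natDegree hPP.ne_zero, hP.natDegree_mul hP, hPd, two_mul]
    rw [← degree_X_pow (R := K)]
    refine degree_sub_lt_left ?_ (pow_ne_zero _ X_ne_zero) ?_
    · rw [hPPdeg, degree_X_pow]
    · rw [hPP.leadingCoeff, (monic_X_pow _).leadingCoeff]
  have hnodes : ∀ z ∈ S, (X ^ (2 * #S) - P * P).eval z = z ^ (2 * #S) := fun z hz => by
    simp [(hroot z hz).eq_zero]
  calc ∑ z ∈ S, L (Lagrange.basis S id z) * z ^ (2 * #S)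
      = L (X ^ (2 * #S) - P * P) := by
        rw [map_eq_sum_lagrange_basis hP hPd horth hroot hdeg]
        exact sum_congr rfl fun z hz => by rw [hnodes z hz]
    _ ≤ L (X ^ (2 * #S)) := by
        rw [map_sub]
        exact sub_le_self _ (hL P)

end Field

end Polynomial

section AtomicMeasure

open Polynomial

noncomputable def atomicIntegral (T : Finset ℝ) (w : ℝ → ℝ) : ℝ[X] →ₗ[ℝ] ℝ :=
  ∑ v ∈ T, w v • leval v

variable {T : Finset ℝ} {w : ℝ → ℝ}

theorem atomicIntegral_apply (p : ℝ[X]) : atomicIntegral T w p = ∑ v ∈ T, w v * p.eval v := by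
  simp [atomicIntegral]

theorem atomicIntegral_mul_self_nonneg (hw : ∀ v ∈ T, 0 ≤ w v) (p : ℝ[X]) :
    0 ≤ atomicIntegral T w (p * p) := by
  rw [atomicIntegral_apply]
  refine sum_nonneg fun v hv => mul_nonneg (hw v hv) ?_
  rw [Polynomial.eval_mul]
  exact mul_self_nonneg _

theorem eval_eq_zero_of_atomicIntegral_eq_zero (hw : ∀ v ∈ T, 0 < w v) {p : ℝ[X]}
    (hp : ∀ y, 0 ≤ p.eval y) (h : atomicIntegral T w p = 0) : ∀ v ∈ T, p.eval v = 0 := by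
  rw [atomicIntegral_apply, sum_eq_zero_iff_of_nonneg fun v hv => mul_nonneg (hw v hv).le (hp v)]
    at h
  exact fun v hv => (mul_eq_zero.mp (h v hv)).resolve_left (hw v hv).ne'

theorem card_oddRoots_of_orthogonal (hw : ∀ v ∈ T, 0 < w v) {P : ℝ[X]} {d : ℕ} (hP : P.Monic)
    (hPd : P.natDegree = d) (horth : ∀ g ∈ degreeLT ℝ d, atomicIntegral T w (P * g) = 0)
    (hT : d < #T) : #P.oddRoots = d := by
  refine le_antisymm (hPd ▸ card_oddRoots_le P) (not_lt.mp fun hlt => hP.ne_zero ?_)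
  -- Otherwise `P` times the nodal polynomial of its sign changes is nonnegative with integral `0`
  -- by orthogonality, so it vanishes on `T`, and then so does `P`: more than `d` roots.
  have hnodal : Lagrange.nodal P.oddRoots id ∈ degreeLT ℝ d := by
    rw [mem_degreeLT, Lagrange.degree_nodal]
    exact_mod_cast hlt
  have hvanish := eval_eq_zero_of_atomicIntegral_eq_zero hw (eval_mul_nodal_oddRoots_nonneg hP)
    (horth _ hnodal)
  refine eq_zero_of_natDegree_lt_card_of_eval_eq_zero' P T (fun v hv => ?_) (hPd ▸ hT)
  have hPQ := hvanish v hv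
  rw [Polynomial.eval_mul] at hPQ
  rcases mul_eq_zero.mp hPQ with h | h
  · exact h
  obtain ⟨z, hz, rfl⟩ : ∃ z ∈ P.oddRoots, v = z := by
    by_contra! hne
    exact Lagrange.eval_nodal_not_at_node hne h
  exact ((mem_oddRoots hP.ne_zero).mp hz).1

theorem exists_atomic_quadrature (d : ℕ) (hw : ∀ v ∈ T, 0 < w v) :
    ∃ (S : Finset ℝ) (u : ℝ → ℝ), #S ≤ d ∧ (∀ z ∈ S, 0 ≤ u z) ∧
      (∀ i < 2 * d, ∑ z ∈ S, u z * z ^ i = ∑ v ∈ T, w v * v ^ i) ∧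
      ∑ z ∈ S, u z * z ^ (2 * d) ≤ ∑ v ∈ T, w v * v ^ (2 * d) := by
  rcases le_or_gt #T d with hT | hT
  · exact ⟨T, w, hT, fun v hv => (hw v hv).le, fun _ _ => rfl, le_rfl⟩
  let L := atomicIntegral T w
  have hL : ∀ p, 0 ≤ L (p * p) := atomicIntegral_mul_self_nonneg fun v hv => (hw v hv).le
  have hmoment : ∀ i, L (Polynomial.X ^ i) = ∑ v ∈ T, w v * v ^ i := by
    simp [L, atomicIntegral_apply]
  obtain ⟨P, hP, hPd, horth⟩ := exists_monic_orthogonal L d fun h hh hLh => by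
    refine eq_zero_of_natDegree_lt_card_of_eval_eq_zero' h T (fun v hv => ?_) ?_
    · have := eval_eq_zero_of_atomicIntegral_eq_zero hw (fun y => by
        rw [Polynomial.eval_mul]; exact mul_self_nonneg _) hLh v hv
      rwa [Polynomial.eval_mul, mul_self_eq_zero] at this
    · exact (natDegree_le_of_degree_le (mem_degreeLT.mp hh).le).trans_lt hT
  have hS := card_oddRoots_of_orthogonal hw hP hPd horth hT
  subst hS
  have hroot : ∀ z ∈ P.oddRoots, P.IsRoot z := fun z hz => ((mem_oddRoots hP.ne_zero).mp hz).1
  refine ⟨P.oddRoots, fun z => L (Lagrange.basis P.oddRoots id z), le_rfl,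
    fun z hz => map_lagrange_basis_nonneg hL hP hPd horth hroot hz, fun i hi => ?_, ?_⟩
  · rw [← hmoment, map_eq_sum_lagrange_basis hP hPd horth hroot]
    · simp
    · rw [degree_X_pow]; exact_mod_cast hi
  · rw [← hmoment]
    exact sum_lagrange_basis_mul_pow_le hL hP hPd horth hroot

end AtomicMeasure

theorem weightedMoment_eq_sum_image {ι : Type*} [Fintype ι] (w x : ι → ℝ) (i : ℕ) :
    weightedMoment w x i = ∑ v ∈ univ.image x, (∑ j with x j = v, w j) * v ^ i := by
  rw [weightedMoment, ← sum_fiberwise_of_maps_to fun j _ => mem_image_of_mem x (mem_univ j)]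
  refine sum_congr rfl fun v _ => ?_
  rw [sum_mul]
  exact sum_congr rfl fun j hj => by rw [(mem_filter.mp hj).2]

theorem exists_weightedMoment_eq_sum {d : ℕ} {S : Finset ℝ} (hS : #S ≤ d) {u : ℝ → ℝ}
    (hu : ∀ z ∈ S, 0 ≤ u z) :
    ∃ s t : Fin d → ℝ, (∀ j, 0 ≤ s j) ∧ ∀ i, weightedMoment s t i = ∑ z ∈ S, u z * z ^ i := by
  obtain ⟨e⟩ : Nonempty (S ↪ Fin d) := Function.Embedding.nonempty_of_card_le (by simpa using hS)
  let s := Function.extend e (fun z => u z) 0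
  let t := Function.extend e (fun z => (z : ℝ)) 0
  refine ⟨s, t, fun j => ?_, fun i => ?_⟩
  · by_cases hj : ∃ z, e z = j
    · obtain ⟨z, rfl⟩ := hj
      simpa [s, e.injective.extend_apply] using hu z z.2
    · simp [s, Function.extend_apply' _ _ _ hj]
  · rw [weightedMoment, ← sum_coe_sort S]
    refine (Fintype.sum_of_injective e e.injective _ _ (fun j hj => ?_) fun z => ?_).symm
    · simp [s, Function.extend_apply' _ _ _ hj]
    · simp [s, t, e.injective.extend_apply]

theorem exists_quadrature_weightedMoment {ι : Type*} [Fintype ι] (d : ℕ) {w : ι → ℝ}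
    (hw : ∀ j, 0 < w j) (x : ι → ℝ) :
    ∃ s t : Fin d → ℝ, (∀ j, 0 ≤ s j) ∧
      (∀ i < 2 * d, weightedMoment s t i = weightedMoment w x i) ∧
      weightedMoment s t (2 * d) ≤ weightedMoment w x (2 * d) := by
  obtain ⟨S, u, hS, hu, hlow, htop⟩ := exists_atomic_quadrature (T := univ.image x)
    (w := fun v => ∑ j with x j = v, w j) d fun v hv => by
      obtain ⟨j, -, rfl⟩ := mem_image.mp hv
      exact sum_pos (fun j _ => hw j) ⟨j, by simp⟩
  obtain ⟨s, t, hs, hst⟩ := exists_weightedMoment_eq_sum hS hu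
  refine ⟨s, t, hs, fun i hi => ?_, ?_⟩
  · rw [hst, hlow i hi, weightedMoment_eq_sum_image]
  · rw [hst, weightedMoment_eq_sum_image]
    exact htop

theorem symForm_nonneg_of_phiForm_nonneg {d : ℕ} (hd : 2 ≤ d) {c : Nat.Partition (2 * d) → ℝ}
    (hphi : ∀ s ∈ stdSimplex ℝ (Fin d), ∀ t, 0 ≤ phiForm d c s t) {n : ℕ} (hn : 0 < n)
    (x : Fin n → ℝ) : 0 ≤ eval x (symForm n c) := by
  obtain ⟨s, t, hs, hlow, htop⟩ :=
    exists_quadrature_weightedMoment d (w := fun _ => (n : ℝ)⁻¹) (fun _ => by positivity) x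
  have hsum : ∑ j, s j = 1 := by
    simpa [weightedMoment, hn.ne'] using hlow 0 (by omega)
  calc 0 ≤ phiForm d c s t := hphi s ⟨hs, hsum⟩ t
    _ ≤ eval x (symForm n c) := by
      rw [phiForm_eq_momentForm, eval_symForm]
      exact momentForm_le_momentForm (by omega)
        (nonneg_indiscrete_of_phiForm_nonneg (by omega) hd hphi) hlow htop

/-- For `d ≥ 2`, the symmetric form `f^{(n)} = Σ_{λ⊢2d} c_λ p_λ^{(n)}` is
nonnegative on `ℝ^n` for every `n ≥ 2d` if and only if `Φ_c(s,t)` is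
nonnegative on `Δ × ℝ^d`, where `Δ` is the standard simplex in `ℝ^d`. -/
theorem nonneg_all_n_iff_phi_on_simplex (d : ℕ) (hd : 2 ≤ d)
    (c : Nat.Partition (2 * d) → ℝ) :
    (∀ n : ℕ, 2 * d ≤ n → ∀ x : Fin n → ℝ, 0 ≤ eval x (symForm n c)) ↔
    (∀ s : Fin d → ℝ, (∀ i, 0 ≤ s i ∧ s i ≤ 1) → (∑ i : Fin d, s i = 1) →
      ∀ t : Fin d → ℝ, 0 ≤ phiForm d c s t) := by
  constructor
  · intro hf s hs hsum t
    exact phiForm_nonneg_of_forall_symForm_nonneg c hf ⟨fun i => (hs i).1, hsum⟩ t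
  · intro hphi n hn x
    refine symForm_nonneg_of_phiForm_nonneg hd (fun s hs t => ?_) (by omega) x
    exact hphi s (mem_Icc_of_mem_stdSimplex hs) hs.2 t
end

section
/- Let n ≥ 2d, let ℓ ≥ 1 be a natural number, and let c = (c_λ)_{λ⊢2d} be a coefficient vector. If the symmetric form Σ_{λ⊢2d} c_λ p_λ^{(ℓn)} in ℓ·n variables is nonnegative on ℝ^{ℓn}, then the symmetric form Σ_{λ⊢2d} c_λ p_λ^{(n)} in n variables is nonnegative on ℝ^n. In other words, P^S_{ℓn,2d} ⊆ P^S_{n,2d} as subsets of ℝ^{π(2d)}. -/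
open MvPolynomial

lemma psum_eval_rep (n l : ℕ) (hn : 0 < n) (hl : 0 < l) (x : Fin n → ℝ) (i : ℕ) :
    eval (fun j : Fin (l * n) => x ⟨j.val % n, Nat.mod_lt _ hn⟩) (psum (l * n) i)
      = eval x (psum n i) := by
  simp only [_root_.psum, map_mul, map_sum, eval_C, map_pow, eval_X]
  have hsum : (∑ j : Fin (l * n), x ⟨j.val % n, Nat.mod_lt _ hn⟩ ^ i)
      = (l : ℝ) * ∑ j : Fin n, x j ^ i := by
    rw [← Fintype.sum_equiv finProdFinEquiv
      (fun p : Fin l × Fin n => x ⟨(finProdFinEquiv p).val % n, Nat.mod_lt _ hn⟩ ^ i)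
      (fun j : Fin (l * n) => x ⟨j.val % n, Nat.mod_lt _ hn⟩ ^ i) (fun p => rfl)]
    have : ∀ p : Fin l × Fin n, (⟨(finProdFinEquiv p).val % n, Nat.mod_lt _ hn⟩ : Fin n) = p.2 := by
      intro p
      ext
      simp [finProdFinEquiv, Nat.add_mul_mod_self_left, Nat.mod_eq_of_lt p.2.isLt]
    rw [Fintype.sum_congr _ _ (fun p => by rw [this p])]
    rw [Fintype.sum_prod_type]
    simp [Finset.sum_const, mul_comm]
  rw [hsum]
  have hl' : (l : ℝ) ≠ 0 := Nat.cast_ne_zero.mpr hl.ne'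
  have hn' : (n : ℝ) ≠ 0 := Nat.cast_ne_zero.mpr hn.ne'
  push_cast
  field_simp

/-- `P^S_{ℓn,2d} ⊆ P^S_{n,2d}`: if the symmetric form `Σ_{λ⊢2d} c_λ p_λ^{(ℓn)}`
in `ℓ·n` variables is nonnegative on `ℝ^{ℓn}`, then the symmetric form
`Σ_{λ⊢2d} c_λ p_λ^{(n)}` in `n` variables is nonnegative on `ℝ^n`. -/
theorem PCone_mul_subset (d n l : ℕ) (hn : 2 * d ≤ n) (hl : 1 ≤ l)
    (c : Nat.Partition (2 * d) → ℝ)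
    (h : ∀ x : Fin (l * n) → ℝ, 0 ≤ eval x (symForm (l * n) c)) :
    ∀ x : Fin n → ℝ, 0 ≤ eval x (symForm n c) := by
  intro x
  rcases Nat.eq_zero_or_pos n with rfl | hn0
  · exact h x
  have key := h (fun j : Fin (l * n) => x ⟨j.val % n, Nat.mod_lt _ hn0⟩)
  have heq : eval (fun j : Fin (l * n) => x ⟨j.val % n, Nat.mod_lt _ hn0⟩) (symForm (l * n) c)
      = eval x (symForm n c) := by
    simp only [symForm, map_sum, map_mul, eval_C, pPart]
    refine Finset.sum_congr rfl fun lam _ => ?_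
    congr 1
    rw [map_multiset_prod, map_multiset_prod, Multiset.map_map, Multiset.map_map]
    congr 1
    exact Multiset.map_congr rfl fun i _ => psum_eval_rep n l hn0 hl x i
  rw [← heq]
  exact key
end

section
/- Let n ≥ 2d, let ℓ ≥ 1 be a natural number, and let c = (c_λ)_{λ⊢2d} be a coefficient vector. If the symmetric form Σ_{λ⊢2d} c_λ p_λ^{(ℓn)} in ℓ·n variables is a sum of squares of polynomials, then the symmetric form Σ_{λ⊢2d} c_λ p_λ^{(n)} in n variables is a sum of squares of polynomials. In other words, Σ^S_{ℓn,2d} ⊆ Σ^S_{n,2d} as subsets of ℝ^{π(2d)}. -/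
/-!
Identify the `l * n` variables with pairs `(k, j) ∈ Fin l × Fin n` and substitute
`x_{(k,j)} ↦ x_j`. This ring homomorphism sends every normalized power sum `p_i^{(ln)}` to
`p_i^{(n)}` (each `x_j^i` occurs `l` times, which the normalization `1/(ln)` absorbs), hence the
form with coefficients `c` in `l * n` variables to the one in `n` variables; and ring
homomorphisms preserve sums of squares.
-/

open MvPolynomial

theorem IsSumSq.map_s8 {R S F : Type*} [CommSemiring R] [CommSemiring S] [FunLike F R S]
    [RingHomClass F R S] (f : F) {a : R} (h : IsSumSq a) : IsSumSq (f a) := by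
  induction h with
  | zero => simp
  | sq_add a _ ih => simpa using IsSumSq.sq_add (f a) ih

section Substitution

variable {m n : ℕ} (φ : MvPolynomial (Fin m) ℝ →ₐ[ℝ] MvPolynomial (Fin n) ℝ)

theorem map_pPart (hφ : ∀ i, φ (_root_.psum m i) = _root_.psum n i) {k : ℕ}
    (lam : Nat.Partition k) : φ (pPart m lam) = pPart n lam := by
  rw [pPart, pPart, map_multiset_prod, Multiset.map_map]
  exact congrArg _ (Multiset.map_congr rfl fun i _ => hφ i)

theorem map_symForm (hφ : ∀ i, φ (_root_.psum m i) = _root_.psum n i) {k : ℕ}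
    (c : Nat.Partition k → ℝ) : φ (symForm m c) = symForm n c := by
  simp only [symForm, map_sum, map_mul, algHom_C, algebraMap_eq, map_pPart φ hφ]

end Substitution

theorem rename_snd_finProdFinEquiv_symm_psum {l : ℕ} (hl : l ≠ 0) (n i : ℕ) :
    rename (fun a : Fin (l * n) => (finProdFinEquiv.symm a).2) (_root_.psum (l * n) i) =
      _root_.psum n i := by
  have hsum : ∑ a : Fin (l * n), (X (finProdFinEquiv.symm a).2 : MvPolynomial (Fin n) ℝ) ^ i
      = C (l : ℝ) * ∑ j : Fin n, X j ^ i := by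
    rw [Equiv.sum_comp finProdFinEquiv.symm (fun p => X p.2 ^ i), Fintype.sum_prod_type]
    simp only [Finset.sum_const, Finset.card_univ, Fintype.card_fin, nsmul_eq_mul,
      ← map_natCast C]
  have hnorm : ((l * n : ℕ) : ℝ)⁻¹ * l = (n : ℝ)⁻¹ := by
    rw [Nat.cast_mul, mul_inv, mul_right_comm, inv_mul_cancel₀ (Nat.cast_ne_zero.mpr hl), one_mul]
  simp only [_root_.psum, map_mul, rename_C, map_sum, map_pow, rename_X]
  rw [hsum, ← mul_assoc, ← C_mul, hnorm]

theorem SCone_mul_subset_general (d n l : ℕ) (hl : 1 ≤ l)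
    (c : Nat.Partition (2 * d) → ℝ)
    (h : IsSumSq (symForm (l * n) c)) :
    IsSumSq (symForm n c) := by
  have hfold := map_symForm (rename fun a : Fin (l * n) => (finProdFinEquiv.symm a).2)
    (rename_snd_finProdFinEquiv_symm_psum (Nat.one_le_iff_ne_zero.mp hl) n) c
  exact hfold ▸ h.map_s8 _

/-- `Σ^S_{ℓn,2d} ⊆ Σ^S_{n,2d}`: if the symmetric form `Σ_{λ⊢2d} c_λ p_λ^{(ℓn)}`
in `ℓ·n` variables is a sum of squares of polynomials, then so is the symmetric
form `Σ_{λ⊢2d} c_λ p_λ^{(n)}` in `n` variables. -/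
theorem SCone_mul_subset (d n l : ℕ) (hn : 2 * d ≤ n) (hl : 1 ≤ l)
    (c : Nat.Partition (2 * d) → ℝ)
    (h : IsSumSq (symForm (l * n) c)) :
    IsSumSq (symForm n c) :=
  SCone_mul_subset_general d n l hl c h
end

section
/- Let d ≥ 1 and n ≥ 2d. Every symmetric form of degree 2d in n variables is a real linear combination of the forms p_{μ1}^{(n)} p_{μ2}^{(n)} with μ1, μ2 partitions of d, together with the forms (p_{a+b}^{(n)} − p_a^{(n)} p_b^{(n)}) p_{μ1}^{(n)} p_{μ2}^{(n)} with a, b ∈ {1,…,d}, μ1 a partition of d−a and μ2 a partition of d−b (where the empty partition is allowed, with p_∅^{(n)} := 1). -/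
/-! Over a field of characteristic zero, Newton's identities express every elementary symmetric
polynomial through power sums of positive degree, so by the fundamental theorem of symmetric
polynomials a symmetric form of degree `2d` is a linear combination of the `p_μ` with `μ ⊢ 2d`.
Walking through the parts of `μ`, either some of them add up to exactly `d`, so that
`p_μ = p_{μ1} p_{μ2}` with `μ1, μ2 ⊢ d`, or a part `a + b` jumps across `d`: the parts `A` before
it sum to `d - a` and the remaining parts `B` to `d - b`, and then
`p_μ = (p_{a+b} - p_a p_b) p_A p_B + p_{A ∪ a} p_{B ∪ b}`. -/

open MvPolynomial

namespace MvPolynomial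

section PowerSums

variable {σ K : Type*} [Fintype σ] [Field K] [CharZero K]

theorem esymm_mem_adjoin_psum (k : ℕ) :
    esymm σ K k ∈ Algebra.adjoin K (psum σ K '' {i | 0 < i}) := by
  induction k using Nat.strong_induction_on with
  | _ k ih =>
  rcases k.eq_zero_or_pos with rfl | hk
  · simp
  have hk0 : (k : K) ≠ 0 := Nat.cast_ne_zero.2 hk.ne'
  have hesymm : esymm σ K k = (k : K)⁻¹ • ((k : MvPolynomial σ K) * esymm σ K k) := by
    rw [← nsmul_eq_mul, ← Nat.cast_smul_eq_nsmul K, smul_smul, inv_mul_cancel₀ hk0, one_smul]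
  rw [hesymm]
  refine Subalgebra.smul_mem _ ?_ _
  rw [mul_esymm_eq_sum]
  refine Subalgebra.mul_mem _ (Subalgebra.pow_mem _ (Subalgebra.neg_mem _ (Subalgebra.one_mem _)) _)
    (Subalgebra.sum_mem _ fun j hj => ?_)
  simp only [Finset.mem_filter, Finset.HasAntidiagonal.mem_antidiagonal] at hj
  refine Subalgebra.mul_mem _ (Subalgebra.mul_mem _
    (Subalgebra.pow_mem _ (Subalgebra.neg_mem _ (Subalgebra.one_mem _)) _) (ih j.1 hj.2)) ?_
  exact Algebra.subset_adjoin ⟨j.2, by simp only [Set.mem_ofPred_eq]; omega, rfl⟩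

theorem IsSymmetric.mem_adjoin_psum {f : MvPolynomial σ K} (hf : f.IsSymmetric) :
    f ∈ Algebra.adjoin K (psum σ K '' {i | 0 < i}) := by
  obtain ⟨q, hq⟩ := esymmAlgHom_surjective K le_rfl ⟨f, hf⟩
  have hf_eq : aeval (fun i : Fin (Fintype.card σ) => esymm σ K (i + 1)) q = f := by
    rw [← esymmAlgHom_apply, hq]
  have hf_mem :
      f ∈ Algebra.adjoin K (Set.range fun i : Fin (Fintype.card σ) => esymm σ K (i + 1)) := by
    rw [Algebra.adjoin_range_eq_range_aeval]
    exact ⟨q, hf_eq⟩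
  refine Algebra.adjoin_le ?_ hf_mem
  rintro _ ⟨i, rfl⟩
  exact esymm_mem_adjoin_psum _

end PowerSums

theorem mem_span_image_of_isHomogeneous {σ R ι : Type*} [CommSemiring R]
    {g : ι → MvPolynomial σ R} {deg : ι → ℕ} (hg : ∀ i, (g i).IsHomogeneous (deg i))
    {s : Set ι} {f : MvPolynomial σ R} {k : ℕ} (hf : f ∈ Submodule.span R (g '' s))
    (hfk : f.IsHomogeneous k) :
    f ∈ Submodule.span R (g '' {i ∈ s | deg i = k}) := by
  have hcomp := Submodule.mem_map_of_mem (f := homogeneousComponent k) hf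
  rw [Submodule.map_span, homogeneousComponent_eq_self hfk] at hcomp
  refine Submodule.span_le.2 ?_ hcomp
  rintro _ ⟨_, ⟨i, hi, rfl⟩, rfl⟩
  by_cases hik : deg i = k
  · rw [homogeneousComponent_eq_self (hik ▸ hg i)]
    exact Submodule.subset_span ⟨i, ⟨hi, hik⟩, rfl⟩
  · rw [homogeneousComponent_of_mem (hg i), if_neg (Ne.symm hik)]
    exact Submodule.zero_mem _

end MvPolynomial

theorem Submonoid.exists_multiset_of_mem_closure_image {M α : Type*} [CommMonoid M] {f : α → M}
    {s : Set α} {x : M} (hx : x ∈ Submonoid.closure (f '' s)) :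
    ∃ m : Multiset α, (∀ a ∈ m, a ∈ s) ∧ (m.map f).prod = x := by
  obtain ⟨l, hl, rfl⟩ := Submonoid.exists_multiset_of_mem_closure hx
  clear hx
  induction l using Multiset.induction_on with
  | empty => exact ⟨0, by simp, by simp⟩
  | cons y l ih =>
    obtain ⟨a, ha, rfl⟩ := hl y (Multiset.mem_cons_self y l)
    obtain ⟨m, hm, hprod⟩ := ih fun z hz => hl z (Multiset.mem_cons_of_mem hz)
    exact ⟨a ::ₘ m, by simpa [ha] using hm, by simp [hprod]⟩

theorem Multiset.exists_sum_eq_or_straddle {M : Multiset ℕ} {d : ℕ} (h : d ≤ M.sum) :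
    (∃ A B, M = A + B ∧ A.sum = d) ∨ ∃ p A B, M = p ::ₘ (A + B) ∧ A.sum < d ∧ d < A.sum + p := by
  induction M using Multiset.induction_on with
  | empty => exact .inl ⟨0, 0, rfl, by simpa [eq_comm] using h⟩
  | cons p M ih =>
    rw [Multiset.sum_cons] at h
    by_cases hM : d ≤ M.sum
    · rcases ih hM with ⟨A, B, rfl, hA⟩ | ⟨q, A, B, rfl, hA, hAq⟩
      · exact .inl ⟨A, p ::ₘ B, by rw [Multiset.add_cons], hA⟩
      · exact .inr ⟨q, A, p ::ₘ B, by rw [Multiset.add_cons, Multiset.cons_swap], hA, hAq⟩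
    · rcases h.eq_or_lt with h | h
      · exact .inl ⟨p ::ₘ M, 0, by simp, by simp [h]⟩
      · exact .inr ⟨p, M, 0, by simp, by omega, by omega⟩

theorem natCast_smul_psum (n i : ℕ) : (n : ℝ) • psum n i = MvPolynomial.psum (Fin n) ℝ i := by
  rcases eq_or_ne n 0 with rfl | hn
  · simp [MvPolynomial.psum]
  rw [_root_.psum, smul_eq_C_mul, ← mul_assoc, ← C_mul, mul_inv_cancel₀ (Nat.cast_ne_zero.2 hn),
    C_1, one_mul, MvPolynomial.psum]

theorem psum_isHomogeneous (n i : ℕ) : (psum n i).IsHomogeneous i :=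
  (IsHomogeneous.sum _ _ _ fun j _ => isHomogeneous_X_pow j i).C_mul _

theorem multiset_prod_psum_isHomogeneous (n : ℕ) (m : Multiset ℕ) :
    ((m.map (psum n)).prod).IsHomogeneous m.sum := by
  induction m using Multiset.induction_on with
  | empty => simpa using isHomogeneous_one (Fin n) ℝ
  | cons i m ih => simpa using (psum_isHomogeneous n i).mul ih

theorem mem_span_pPart_of_isSymmetric {n k : ℕ} {f : MvPolynomial (Fin n) ℝ}
    (hsym : f.IsSymmetric) (hhom : f.IsHomogeneous k) :
    f ∈ Submodule.span ℝ (Set.range (pPart n : Nat.Partition k → _)) := by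
  have hadj : f ∈ Algebra.adjoin ℝ (psum n '' {i | 0 < i}) := by
    refine Algebra.adjoin_le ?_ hsym.mem_adjoin_psum
    rintro _ ⟨i, hi, rfl⟩
    rw [← natCast_smul_psum]
    exact Subalgebra.smul_mem _ (Algebra.subset_adjoin (Set.mem_image_of_mem _ hi)) _
  have hspan : f ∈ Submodule.span ℝ
      ((fun m : Multiset ℕ => (m.map (psum n)).prod) '' {m | ∀ i ∈ m, 0 < i}) := by
    rw [← Subalgebra.mem_toSubmodule, Algebra.adjoin_eq_span] at hadj
    exact Submodule.span_mono (fun _ hx => Submonoid.exists_multiset_of_mem_closure_image hx) hadj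
  refine Submodule.span_mono ?_
    (mem_span_image_of_isHomogeneous (multiset_prod_psum_isHomogeneous n) hspan hhom)
  rintro _ ⟨m, ⟨hpos, hsum⟩, rfl⟩
  exact ⟨⟨m, hpos _, hsum⟩, rfl⟩

def splitForms (n d : ℕ) : Set (MvPolynomial (Fin n) ℝ) :=
  {q | ∃ μ1 μ2 : Nat.Partition d, q = pPart n μ1 * pPart n μ2} ∪
    {q | ∃ a b : ℕ, 1 ≤ a ∧ a ≤ d ∧ 1 ≤ b ∧ b ≤ d ∧
      ∃ (μ1 : Nat.Partition (d - a)) (μ2 : Nat.Partition (d - b)),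
        q = (psum n (a + b) - psum n a * psum n b) * pPart n μ1 * pPart n μ2}

theorem pPart_mem_span_splitForms {n d : ℕ} (μ : Nat.Partition (2 * d)) :
    pPart n μ ∈ Submodule.span ℝ (splitForms n d) := by
  have hsum := μ.parts_sum
  rcases Multiset.exists_sum_eq_or_straddle (M := μ.parts) (d := d) (by omega) with
    ⟨A, B, hAB, hA⟩ | ⟨p, A, B, hAB, hA, hAp⟩
  · have hB : B.sum = d := by rw [hAB, Multiset.sum_add] at hsum; omega
    refine Submodule.subset_span (Or.inl ⟨⟨A, fun hi => μ.parts_pos (by simp [hAB, hi]), hA⟩,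
      ⟨B, fun hi => μ.parts_pos (by simp [hAB, hi]), hB⟩, ?_⟩)
    simp only [pPart, hAB, Multiset.map_add, Multiset.prod_add]
  · rw [hAB, Multiset.sum_cons, Multiset.sum_add] at hsum
    obtain ⟨a, b, rfl, ha, had, hb, hbd, hAa, hBb⟩ : ∃ a b, p = a + b ∧ 1 ≤ a ∧ a ≤ d ∧ 1 ≤ b ∧
        b ≤ d ∧ A.sum = d - a ∧ B.sum = d - b :=
      ⟨d - A.sum, p - (d - A.sum), by omega⟩
    have hApos : ∀ {i}, i ∈ A → 0 < i := fun hi => μ.parts_pos (by simp [hAB, hi])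
    have hBpos : ∀ {i}, i ∈ B → 0 < i := fun hi => μ.parts_pos (by simp [hAB, hi])
    let α : Nat.Partition (d - a) := ⟨A, hApos, hAa⟩
    let β : Nat.Partition (d - b) := ⟨B, hBpos, hBb⟩
    let α' : Nat.Partition d :=
      ⟨a ::ₘ A, fun hi => (Multiset.mem_cons.1 hi).elim (· ▸ ha) hApos, by simp; omega⟩
    let β' : Nat.Partition d :=
      ⟨b ::ₘ B, fun hi => (Multiset.mem_cons.1 hi).elim (· ▸ hb) hBpos, by simp; omega⟩
    have hsplit : pPart n μ = (psum n (a + b) - psum n a * psum n b) * pPart n α * pPart n β +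
        pPart n α' * pPart n β' := by
      simp only [pPart, hAB, α, β, α', β', Multiset.map_cons, Multiset.prod_cons, Multiset.map_add,
        Multiset.prod_add]
      ring
    rw [hsplit]
    exact add_mem (Submodule.subset_span (Or.inr ⟨a, b, ha, had, hb, hbd, α, β, rfl⟩))
      (Submodule.subset_span (Or.inl ⟨α', β', rfl⟩))

theorem symForm_mem_span_general (d n : ℕ)
    (f : MvPolynomial (Fin n) ℝ) (hsym : f.IsSymmetric) (hhom : f.IsHomogeneous (2 * d)) :
    f ∈ Submodule.span ℝ
      ({q : MvPolynomial (Fin n) ℝ |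
          ∃ μ1 μ2 : Nat.Partition d, q = pPart n μ1 * pPart n μ2} ∪
       {q : MvPolynomial (Fin n) ℝ |
          ∃ a b : ℕ, 1 ≤ a ∧ a ≤ d ∧ 1 ≤ b ∧ b ≤ d ∧
            ∃ (μ1 : Nat.Partition (d - a)) (μ2 : Nat.Partition (d - b)),
              q = (psum n (a + b) - psum n a * psum n b) * pPart n μ1 * pPart n μ2}) := by
  refine Submodule.span_le.2 ?_ (mem_span_pPart_of_isSymmetric hsym hhom)
  rintro _ ⟨μ, rfl⟩
  exact pPart_mem_span_splitForms μ

/-- For `d ≥ 1` and `n ≥ 2d`, every symmetric form of degree `2d` in `n`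
variables is a real linear combination of the forms `p_{μ1} p_{μ2}` with
`μ1, μ2 ⊢ d`, together with the forms `(p_{a+b} − p_a p_b) p_{μ1} p_{μ2}` with
`a, b ∈ {1,…,d}`, `μ1 ⊢ d − a`, `μ2 ⊢ d − b` (where the empty partition of `0`
is allowed, with `p_∅ = 1`). -/
theorem symForm_mem_span (d n : ℕ) (hd : 1 ≤ d) (hn : 2 * d ≤ n)
    (f : MvPolynomial (Fin n) ℝ) (hsym : f.IsSymmetric) (hhom : f.IsHomogeneous (2 * d)) :
    f ∈ Submodule.span ℝ
      ({q : MvPolynomial (Fin n) ℝ |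
          ∃ μ1 μ2 : Nat.Partition d, q = pPart n μ1 * pPart n μ2} ∪
       {q : MvPolynomial (Fin n) ℝ |
          ∃ a b : ℕ, 1 ≤ a ∧ a ≤ d ∧ 1 ≤ b ∧ b ≤ d ∧
            ∃ (μ1 : Nat.Partition (d - a)) (μ2 : Nat.Partition (d - b)),
              q = (psum n (a + b) - psum n a * psum n b) * pPart n μ1 * pPart n μ2}) :=
  symForm_mem_span_general d n f hsym hhom
end

section
/- For every integer n ≥ 4, Sym_n((x_1 − x_2)^2 (x_3 − x_4)^2) = (8n^3/((n−1)(n−2)(n−3))) · ((1/2) p_{(1,1,1,1)}^{(n)} − p_{(2,1,1)}^{(n)} + ((n^2 − 3n + 3)/(2n^2)) p_{(2,2)}^{(n)} + ((2n−2)/n^2) p_{(3,1)}^{(n)} + ((1−n)/(2n^2)) p_{(4)}^{(n)}). -/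
open MvPolynomial

/-- The symmetrization `Sym_n(f) = (1/n!) Σ_{σ ∈ S_n} σ·f`. -/
noncomputable def symmetrize (n : ℕ) (f : MvPolynomial (Fin n) ℝ) :
    MvPolynomial (Fin n) ℝ :=
  C ((n.factorial : ℝ)⁻¹) * ∑ σ : Equiv.Perm (Fin n), rename (⇑σ) f

/-!
Summing over all permutations `σ` visits every injective 4-tuple of indices equally often, so
`Sym_n((x₁ - x₂)²(x₃ - x₄)²)` is the average of `(xᵢ - xⱼ)²(xₖ - xₗ)²` over pairwise distinct
`(i, j, k, l)`. For a symmetric kernel `T` vanishing on the diagonal, inclusion–exclusion over the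
pairs `(k, l)` meeting `{i, j}` gives
`∑_{distinct} T i j * T k l = (∑ T)² - 4 ∑ᵢ (∑ⱼ T i j)² + 2 ∑ T²`,
and for `T i j = (xᵢ - xⱼ)²` each of these three sums is a polynomial in the power sums.
-/

open Finset

section OrbitSum

variable {G α M : Type*} [Group G] [Fintype G] [MulAction G α] [Fintype α]
  [MulAction.IsPretransitive G α] [AddCommMonoid M]

theorem card_nsmul_sum_smul_eq_card_nsmul_sum (F : α → M) (x : α) :
    Fintype.card α • ∑ g : G, F (g • x) = Fintype.card G • ∑ y : α, F y := by
  have hconst (y : α) : ∑ g : G, F (g • y) = ∑ g : G, F (g • x) := by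
    obtain ⟨h, rfl⟩ := MulAction.exists_smul_eq G x y
    exact Fintype.sum_equiv (Equiv.mulRight h) _ _ fun g => by
      rw [Equiv.coe_mulRight, mul_smul]
  calc Fintype.card α • ∑ g : G, F (g • x) = ∑ y : α, ∑ g : G, F (g • y) := by
        simp only [hconst, sum_const, card_univ]
    _ = ∑ g : G, ∑ y : α, F (g • y) := sum_comm
    _ = ∑ g : G, ∑ y : α, F y :=
        sum_congr rfl fun g _ => Fintype.sum_equiv (MulAction.toPerm g) _ _ fun _ => rfl
    _ = Fintype.card G • ∑ y : α, F y := by rw [sum_const, card_univ]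

end OrbitSum

section DisjointPairs

variable {ι R : Type*} [Fintype ι] [DecidableEq ι]

theorem sum_embedding_fin_four {M : Type*} [AddCommMonoid M] (F : ι → ι → ι → ι → M) :
    ∑ w : Fin 4 ↪ ι, F (w 0) (w 1) (w 2) (w 3) =
      ∑ i, ∑ j, ∑ k, ∑ l,
        if i ≠ j ∧ i ≠ k ∧ i ≠ l ∧ j ≠ k ∧ j ≠ l ∧ k ≠ l then F i j k l else 0 := by
  have : ∑ w : Fin 4 ↪ ι, F (w 0) (w 1) (w 2) (w 3) =
      ∑ q ∈ univ.filter fun q : ι × ι × ι × ι => q.1 ≠ q.2.1 ∧ q.1 ≠ q.2.2.1 ∧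
          q.1 ≠ q.2.2.2 ∧ q.2.1 ≠ q.2.2.1 ∧ q.2.1 ≠ q.2.2.2 ∧ q.2.2.1 ≠ q.2.2.2,
        F q.1 q.2.1 q.2.2.1 q.2.2.2 := by
    refine sum_bij' (fun w _ => (w 0, w 1, w 2, w 3))
      (fun q hq => ⟨![q.1, q.2.1, q.2.2.1, q.2.2.2], ?_⟩) ?_ ?_ ?_ ?_ ?_
    · simp only [mem_filter, mem_univ, true_and] at hq
      intro a b hab
      fin_cases a <;> fin_cases b <;> simp_all [eq_comm]
    · intro w _
      simp only [mem_filter, mem_univ, true_and]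
      refine ⟨?_, ?_, ?_, ?_, ?_, ?_⟩ <;> exact w.injective.ne (by decide)
    · intro q _; exact mem_univ _
    · intro w _; ext a; fin_cases a <;> rfl
    · intro q _; rfl
    · intro w _; rfl
  rw [this, sum_filter]
  simp only [Fintype.sum_prod_type]

variable [CommRing R]

theorem sum_sum_compl_pair (T : ι → ι → R) (hT : ∀ i j, T i j = T j i) (hdiag : ∀ i, T i i = 0)
    {i j : ι} (hij : i ≠ j) :
    ∑ k ∈ {i, j}ᶜ, ∑ l ∈ {i, j}ᶜ, T k l =
      ∑ k, ∑ l, T k l - 2 * ∑ l, T i l - 2 * ∑ l, T j l + 2 * T i j := by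
  have hcompl (f : ι → R) : ∑ k ∈ {i, j}ᶜ, f k = ∑ k, f k - f i - f j := by
    rw [← sum_compl_add_sum {i, j}, sum_pair hij]; ring
  have hcol (a : ι) : ∑ k, T k a = ∑ l, T a l := sum_congr rfl fun k _ => hT k a
  simp only [hcompl, sum_sub_distrib, hcol, hdiag, hT j i]
  ring

theorem sum_embedding_fin_four_mul (T : ι → ι → R) (hT : ∀ i j, T i j = T j i)
    (hdiag : ∀ i, T i i = 0) :
    ∑ w : Fin 4 ↪ ι, T (w 0) (w 1) * T (w 2) (w 3) =
      (∑ i, ∑ j, T i j) ^ 2 - 4 * ∑ i, (∑ j, T i j) ^ 2 + 2 * ∑ i, ∑ j, T i j ^ 2 := by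
  have hpair (i j : ι) : (∑ k, ∑ l,
      if i ≠ j ∧ i ≠ k ∧ i ≠ l ∧ j ≠ k ∧ j ≠ l ∧ k ≠ l then T i j * T k l else 0) =
      T i j * (∑ k, ∑ l, T k l - 2 * ∑ l, T i l - 2 * ∑ l, T j l + 2 * T i j) := by
    rcases eq_or_ne i j with rfl | hij
    · simp [hdiag]
    rw [← sum_sum_compl_pair T hT hdiag hij]
    calc _ = ∑ k, ∑ l, if k ∈ ({i, j}ᶜ : Finset ι) then
          (if l ∈ ({i, j}ᶜ : Finset ι) then T i j * T k l else 0) else 0 := by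
          refine sum_congr rfl fun k _ => sum_congr rfl fun l _ => ?_
          simp only [mem_compl, mem_insert, mem_singleton]
          rcases eq_or_ne k l with rfl | hkl
          · simp [hdiag]
          · split_ifs <;> first | rfl | (exfalso; tauto)
      _ = _ := by simp only [sum_ite_irrel, sum_const_zero, Fintype.sum_ite_mem, mul_sum]
  rw [sum_embedding_fin_four fun i j k l => T i j * T k l]
  simp only [hpair, mul_add, mul_sub, sum_add_distrib, sum_sub_distrib, ← sum_mul]
  have hswap : ∑ i, ∑ j, T i j * (2 * ∑ l, T j l) = ∑ j, (∑ l, T j l) * (2 * ∑ l, T j l) := by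
    rw [sum_comm]
    simp only [← sum_mul, fun j => sum_congr rfl fun i (_ : i ∈ univ) => hT i j]
  rw [hswap]
  simp only [mul_left_comm _ (2 : R), ← mul_sum, ← sq]
  ring

end DisjointPairs

section PowerSums

variable {ι R : Type*} [Fintype ι] [CommRing R] (x : ι → R)

theorem sum_sub_sq (i : ι) :
    ∑ j, (x i - x j) ^ 2 = Fintype.card ι * x i ^ 2 - 2 * x i * ∑ j, x j + ∑ j, x j ^ 2 := by
  simp only [sub_sq, sum_add_distrib, sum_sub_distrib, ← mul_sum, sum_const, card_univ,
    nsmul_eq_mul]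

theorem sum_sum_sub_sq :
    ∑ i, ∑ j, (x i - x j) ^ 2 = 2 * Fintype.card ι * ∑ i, x i ^ 2 - 2 * (∑ i, x i) ^ 2 := by
  simp only [sum_sub_sq, sum_add_distrib, sum_sub_distrib, ← mul_sum, ← sum_mul, sum_const,
    card_univ, nsmul_eq_mul]
  ring

theorem sum_sum_sub_pow_four :
    ∑ i, ∑ j, (x i - x j) ^ 4 =
      2 * Fintype.card ι * ∑ i, x i ^ 4 - 8 * (∑ i, x i) * ∑ i, x i ^ 3
        + 6 * (∑ i, x i ^ 2) ^ 2 := by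
  have h (i j : ι) : (x i - x j) ^ 4 =
      x i ^ 4 - 4 * x i ^ 3 * x j + 6 * x i ^ 2 * x j ^ 2 - 4 * x i * x j ^ 3 + x j ^ 4 := by ring
  simp only [h, sum_add_distrib, sum_sub_distrib, ← mul_sum, ← sum_mul, sum_const,
    card_univ, nsmul_eq_mul]
  ring

theorem sum_sq_sum_sub_sq :
    ∑ i, (∑ j, (x i - x j) ^ 2) ^ 2 =
      (Fintype.card ι : R) ^ 2 * ∑ i, x i ^ 4 - 4 * Fintype.card ι * (∑ i, x i) * ∑ i, x i ^ 3
        + 3 * Fintype.card ι * (∑ i, x i ^ 2) ^ 2 := by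
  have h (i : ι) : (∑ j, (x i - x j) ^ 2) ^ 2 = (Fintype.card ι : R) ^ 2 * x i ^ 4
      - 4 * Fintype.card ι * (∑ j, x j) * x i ^ 3
      + (2 * Fintype.card ι * ∑ j, x j ^ 2 + 4 * (∑ j, x j) ^ 2) * x i ^ 2
      - 4 * (∑ j, x j) * (∑ j, x j ^ 2) * x i + (∑ j, x j ^ 2) ^ 2 := by
    rw [sum_sub_sq]; ring
  simp only [h, sum_add_distrib, sum_sub_distrib, ← mul_sum, sum_const, card_univ, nsmul_eq_mul]
  ring

theorem sum_embedding_fin_four_sub_sq_mul_sub_sq [DecidableEq ι] :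
    ∑ w : Fin 4 ↪ ι, (x (w 0) - x (w 1)) ^ 2 * (x (w 2) - x (w 3)) ^ 2 =
      4 * (∑ i, x i) ^ 4 - 8 * Fintype.card ι * (∑ i, x i ^ 2) * (∑ i, x i) ^ 2
        + (4 * (Fintype.card ι : R) ^ 2 - 12 * Fintype.card ι + 12) * (∑ i, x i ^ 2) ^ 2
        + (16 * Fintype.card ι - 16) * (∑ i, x i ^ 3) * ∑ i, x i
        + (4 * Fintype.card ι - 4 * (Fintype.card ι : R) ^ 2) * ∑ i, x i ^ 4 := by
  rw [sum_embedding_fin_four_mul (fun i j => (x i - x j) ^ 2) (fun i j => by ring)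
    (fun i => by simp), sum_sum_sub_sq, sum_sq_sum_sub_sq]
  simp only [← pow_mul, sum_sum_sub_pow_four]
  ring

end PowerSums

theorem Nat.cast_descFactorial_four {S : Type*} [CommRing S] (n : ℕ) :
    (n.descFactorial 4 : S) = n * (n - 1) * (n - 2) * (n - 3) := by
  rcases n with _ | _ | _ | _ | n <;> simp [Nat.descFactorial_succ]
  ring

theorem symmetrize_eq_sum_embedding {k n : ℕ} (F : (Fin k ↪ Fin n) → MvPolynomial (Fin n) ℝ)
    (hF : ∀ (σ : Equiv.Perm (Fin n)) w, rename σ (F w) = F (σ • w)) (v : Fin k ↪ Fin n) :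
    symmetrize n (F v) = C ((n.descFactorial k : ℝ)⁻¹) * ∑ w, F w := by
  have := Equiv.Perm.isMultiplyPretransitive (Fin n) k
  have hD : (n.descFactorial k : ℝ) ≠ 0 := by
    simpa [Nat.descFactorial_eq_zero_iff_lt] using Fintype.card_le_of_embedding v
  have horbit := card_nsmul_sum_smul_eq_card_nsmul_sum (G := Equiv.Perm (Fin n)) F v
  rw [Fintype.card_embedding_eq, Fintype.card_perm, Fintype.card_fin, Fintype.card_fin] at horbit
  rw [symmetrize, C_mul', C_mul', inv_smul_eq_iff₀ (by positivity), smul_comm,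
    eq_inv_smul_iff₀ hD, Nat.cast_smul_eq_nsmul, Nat.cast_smul_eq_nsmul, ← horbit]
  simp only [hF]

/-- Here `s₁, …, s₄` play the unnormalized power sums `∑ i, X i ^ k`. -/
theorem inv_descFactorial_four_mul_eq {σ : Type*} {n : ℕ} (hn : 4 ≤ n)
    (s₁ s₂ s₃ s₄ : MvPolynomial σ ℝ) :
    (C ((n.descFactorial 4 : ℝ)⁻¹) : MvPolynomial σ ℝ) *
      (4 * s₁ ^ 4 - (8 * n : MvPolynomial σ ℝ) * s₂ * s₁ ^ 2
        + (4 * n ^ 2 - 12 * n + 12 : MvPolynomial σ ℝ) * s₂ ^ 2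
        + (16 * n - 16 : MvPolynomial σ ℝ) * s₃ * s₁
        + (4 * n - 4 * n ^ 2 : MvPolynomial σ ℝ) * s₄) =
      C (8 * (n : ℝ) ^ 3 / (((n : ℝ) - 1) * ((n : ℝ) - 2) * ((n : ℝ) - 3))) *
        (C ((1 : ℝ) / 2) * (C (n : ℝ)⁻¹ * s₁) ^ 4
          - C (n : ℝ)⁻¹ * s₂ * (C (n : ℝ)⁻¹ * s₁) ^ 2
          + C (((n : ℝ) ^ 2 - 3 * (n : ℝ) + 3) / (2 * (n : ℝ) ^ 2)) * (C (n : ℝ)⁻¹ * s₂) ^ 2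
          + C ((2 * (n : ℝ) - 2) / (n : ℝ) ^ 2) * (C (n : ℝ)⁻¹ * s₃ * (C (n : ℝ)⁻¹ * s₁))
          + C ((1 - (n : ℝ)) / (2 * (n : ℝ) ^ 2)) * (C (n : ℝ)⁻¹ * s₄)) := by
  have hn' : (4 : ℝ) ≤ n := by exact_mod_cast hn
  have : (n : ℝ) ≠ 0 := by linarith
  have : (n : ℝ) - 1 ≠ 0 := by linarith
  have : (n : ℝ) - 2 ≠ 0 := by linarith
  have : (n : ℝ) - 3 ≠ 0 := by linarith
  rw [Nat.cast_descFactorial_four]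
  set K := 8 * (n : ℝ) ^ 3 / (((n : ℝ) - 1) * ((n : ℝ) - 2) * ((n : ℝ) - 3)) with hK
  set D := (n : ℝ) * (n - 1) * (n - 2) * (n - 3) with hD
  have e₁ : D⁻¹ * 4 = K * (1 / 2) * (n : ℝ)⁻¹ ^ 4 := by rw [hK, hD]; field_simp; ring
  have e₂ : D⁻¹ * (8 * n) = K * (n : ℝ)⁻¹ ^ 3 := by rw [hK, hD]; field_simp
  have e₃ : D⁻¹ * (4 * n ^ 2 - 12 * n + 12) =
      K * ((n ^ 2 - 3 * n + 3) / (2 * n ^ 2)) * (n : ℝ)⁻¹ ^ 2 := by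
    rw [hK, hD]; field_simp; ring
  have e₄ : D⁻¹ * (16 * n - 16) = K * ((2 * n - 2) / n ^ 2) * (n : ℝ)⁻¹ ^ 2 := by
    rw [hK, hD]; field_simp; ring
  have e₅ : D⁻¹ * (4 * n - 4 * n ^ 2) = K * ((1 - n) / (2 * n ^ 2)) * (n : ℝ)⁻¹ := by
    rw [hK, hD]; field_simp; ring
  apply_fun (C : ℝ → MvPolynomial σ ℝ) at e₁ e₂ e₃ e₄ e₅
  simp only [map_mul, map_pow, map_sub, map_add, map_ofNat, map_natCast] at e₁ e₂ e₃ e₄ e₅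
  linear_combination e₁ * s₁ ^ 4 - e₂ * (s₂ * s₁ ^ 2) + e₃ * s₂ ^ 2 + e₄ * (s₃ * s₁) + e₅ * s₄

/-- For `n ≥ 4`:
`Sym_n((x_1 − x_2)^2 (x_3 − x_4)^2) = (8n³/((n−1)(n−2)(n−3))) ·
  ((1/2) p_{(1⁴)} − p_{(2,1,1)} + ((n²−3n+3)/(2n²)) p_{(2,2)}
   + ((2n−2)/n²) p_{(3,1)} + ((1−n)/(2n²)) p_{(4)})`. -/
theorem symmetrize_sq_sq (n : ℕ) (hn : 4 ≤ n) :
    symmetrize n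
        ((X (⟨0, by omega⟩ : Fin n) - X (⟨1, by omega⟩ : Fin n)) ^ 2 *
         (X (⟨2, by omega⟩ : Fin n) - X (⟨3, by omega⟩ : Fin n)) ^ 2) =
      C (8 * (n : ℝ) ^ 3 / (((n : ℝ) - 1) * ((n : ℝ) - 2) * ((n : ℝ) - 3))) *
        (C ((1 : ℝ) / 2) * psum n 1 ^ 4
          - psum n 2 * psum n 1 ^ 2
          + C (((n : ℝ) ^ 2 - 3 * (n : ℝ) + 3) / (2 * (n : ℝ) ^ 2)) * psum n 2 ^ 2
          + C ((2 * (n : ℝ) - 2) / (n : ℝ) ^ 2) * (psum n 3 * psum n 1)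
          + C ((1 - (n : ℝ)) / (2 * (n : ℝ) ^ 2)) * psum n 4) := by
  let F (w : Fin 4 ↪ Fin n) : MvPolynomial (Fin n) ℝ :=
    (X (w 0) - X (w 1)) ^ 2 * (X (w 2) - X (w 3)) ^ 2
  have hF (σ : Equiv.Perm (Fin n)) (w : Fin 4 ↪ Fin n) : rename σ (F w) = F (σ • w) := by
    simp [F, Function.Embedding.smul_apply, Equiv.Perm.smul_def]
  change symmetrize n (F (Fin.castLEEmb hn)) = _
  rw [symmetrize_eq_sum_embedding F hF,
    sum_embedding_fin_four_sub_sq_mul_sub_sq, Fintype.card_fin]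
  simp only [_root_.psum, pow_one]
  exact inv_descFactorial_four_mul_eq hn _ _ _ _
end

section
/- Let n ≥ 2d and let ℓ be a linear functional on the space H^S_{n,2d} of symmetric forms of degree 2d in n variables. Then ℓ(g) ≥ 0 for every symmetric form g of degree 2d that is a sum of squares of polynomials if and only if the quadratic form Q_ℓ on H_{n,d} defined by Q_ℓ(f) := ℓ(Sym_n(f^2)) is positive semidefinite, i.e. ℓ(Sym_n(f^2)) ≥ 0 for all forms f of degree d in n variables. -/
open MvPolynomial

/-!
A symmetric form `g` is fixed by `Sym_n`, so if `g = ∑ pᵢ²` then `g = ∑ Sym_n(pᵢ²)`; it remains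
to see that each `pᵢ` is a form of degree `d` when `g` is a form of degree `2d`. If every `pᵢ` has
no homogeneous component below degree `e` (or above it), the degree-`2e` component of `∑ pᵢ²` is
`∑ (pᵢ)ₑ²`, and over `ℝ` such a sum vanishes only if every `(pᵢ)ₑ` does. Inducting upwards from
degree `0` and downwards from the top degree kills every component of degree `e ≠ d`.
-/

theorem IsSumSq.exists_fin_sum_mul_self {R : Type*} [AddCommMonoid R] [Mul R] {g : R}
    (h : IsSumSq g) : ∃ (k : ℕ) (f : Fin k → R), g = ∑ i, f i * f i := by
  induction h with
  | zero => exact ⟨0, Fin.elim0, by simp⟩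
  | sq_add a _ ih =>
    obtain ⟨k, f, rfl⟩ := ih
    exact ⟨k + 1, Fin.cons a f, by simp [Fin.sum_univ_succ]⟩

namespace MvPolynomial

open Finset

section Graded

variable {σ R : Type*} [CommSemiring R]

attribute [local instance] MvPolynomial.gradedAlgebra in
theorem homogeneousComponent_mul (k : ℕ) (p q : MvPolynomial σ R) :
    homogeneousComponent k (p * q) =
      ∑ ij ∈ antidiagonal k, homogeneousComponent ij.1 p * homogeneousComponent ij.2 q := by
  have := DirectSum.coe_mul_apply_eq_sum_antidiagonal (homogeneousSubmodule σ R)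
    (DirectSum.decompose (homogeneousSubmodule σ R) p)
    (DirectSum.decompose (homogeneousSubmodule σ R) q) k
  rw [← DirectSum.decompose_mul] at this
  simp only [← decomposition.decompose'_apply]
  exact this

theorem homogeneousComponent_two_mul_mul_self {p : MvPolynomial σ R} {e : ℕ}
    (h : ∀ i j, i + j = 2 * e → i ≠ e →
      homogeneousComponent i p * homogeneousComponent j p = 0) :
    homogeneousComponent (2 * e) (p * p) =
      homogeneousComponent e p * homogeneousComponent e p := by
  rw [homogeneousComponent_mul, sum_eq_single (e, e)]
  · rintro ⟨i, j⟩ hij hne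
    rw [HasAntidiagonal.mem_antidiagonal] at hij
    exact h i j hij fun hi => hne (Prod.ext hi (by omega))
  · simp [two_mul]

theorem isHomogeneous_of_homogeneousComponent_eq_zero {p : MvPolynomial σ R} {d : ℕ}
    (h : ∀ e ≠ d, homogeneousComponent e p = 0) : p.IsHomogeneous d := by
  have hp : homogeneousComponent d p = p := by
    conv_rhs => rw [← sum_homogeneousComponent p]
    refine (sum_eq_single d (fun e _ he => h e he) fun hd => ?_).symm
    exact homogeneousComponent_eq_zero _ _ (by simpa using hd)
  exact hp ▸ homogeneousComponent_isHomogeneous d p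

end Graded

section OrderedRing

variable {σ R ι : Type*} [CommRing R] [LinearOrder R] [IsStrictOrderedRing R]
  {s : Finset ι} {f : ι → MvPolynomial σ R}

theorem eq_zero_of_sum_mul_self_eq_zero (h : ∑ i ∈ s, f i * f i = 0) :
    ∀ i ∈ s, f i = 0 := by
  intro i hi
  refine MvPolynomial.funext fun x => ?_
  have hx := congrArg (eval x) h
  simp only [map_sum, map_mul, map_zero, sum_mul_self_eq_zero_iff] at hx
  simpa using hx i hi

theorem homogeneousComponent_eq_zero_of_sum_mul_self {d e : ℕ}
    (hg : (∑ i ∈ s, f i * f i).IsHomogeneous (2 * d)) (he : e ≠ d)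
    (h : ∀ k ∈ s, ∀ i j, i + j = 2 * e → i ≠ e →
      homogeneousComponent i (f k) * homogeneousComponent j (f k) = 0) :
    ∀ k ∈ s, homogeneousComponent e (f k) = 0 := by
  refine eq_zero_of_sum_mul_self_eq_zero ?_
  calc ∑ k ∈ s, homogeneousComponent e (f k) * homogeneousComponent e (f k)
      = homogeneousComponent (2 * e) (∑ k ∈ s, f k * f k) := by
        rw [map_sum]
        exact sum_congr rfl fun k hk => (homogeneousComponent_two_mul_mul_self (h k hk)).symm
    _ = 0 := by rw [homogeneousComponent_of_mem hg, if_neg (by omega)]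

theorem isHomogeneous_of_sum_mul_self {d : ℕ}
    (hg : (∑ i ∈ s, f i * f i).IsHomogeneous (2 * d)) :
    ∀ i ∈ s, (f i).IsHomogeneous d := by
  have low : ∀ e < d, ∀ k ∈ s, homogeneousComponent e (f k) = 0 := by
    intro e
    induction e using Nat.strong_induction_on with
    | _ e ih =>
      refine fun he => homogeneousComponent_eq_zero_of_sum_mul_self hg he.ne ?_
      intro k hk i j hij hi
      rcases Nat.lt_or_gt_of_ne hi with hi | hi
      · rw [ih i hi (hi.trans he) k hk, zero_mul]
      · rw [ih j (by omega) (by omega) k hk, mul_zero]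
  have high : ∀ e > d, ∀ k ∈ s, homogeneousComponent e (f k) = 0 := by
    intro e
    induction e using Nat.strong_decreasing_induction with
    | base =>
      exact ⟨s.sup fun k => (f k).totalDegree, fun e he _ k hk =>
        homogeneousComponent_eq_zero _ _ ((le_sup hk).trans_lt he)⟩
    | step e ih =>
      refine fun he => homogeneousComponent_eq_zero_of_sum_mul_self hg he.ne' ?_
      intro k hk i j hij hi
      rcases Nat.lt_or_gt_of_ne hi with hi | hi
      · rw [ih j (by omega) (by omega) k hk, mul_zero]
      · rw [ih i hi (he.trans hi) k hk, zero_mul]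
  intro k hk
  refine isHomogeneous_of_homogeneousComponent_eq_zero fun e he => ?_
  rcases Nat.lt_or_gt_of_ne he with he | he
  · exact low e he k hk
  · exact high e he k hk

end OrderedRing

end MvPolynomial

section Symmetrize

open Finset

variable {n : ℕ}

theorem symmetrize_sum {ι : Type*} (s : Finset ι) (f : ι → MvPolynomial (Fin n) ℝ) :
    symmetrize n (∑ i ∈ s, f i) = ∑ i ∈ s, symmetrize n (f i) := by
  simp only [symmetrize, map_sum, mul_sum]
  exact sum_comm

theorem symmetrize_of_isSymmetric {g : MvPolynomial (Fin n) ℝ} (hg : g.IsSymmetric) :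
    symmetrize n g = g := by
  have hsum : ∑ σ : Equiv.Perm (Fin n), rename (⇑σ) g = n.factorial • g := by
    rw [sum_congr rfl fun σ _ => hg σ, sum_const, card_univ, Fintype.card_perm,
      Fintype.card_fin]
  rw [symmetrize, hsum, C_mul', ← Nat.cast_smul_eq_nsmul ℝ, smul_smul,
    inv_mul_cancel₀ (by exact_mod_cast n.factorial_ne_zero), one_smul]

theorem isSymmetric_symmetrize (f : MvPolynomial (Fin n) ℝ) : (symmetrize n f).IsSymmetric := by
  intro τ
  rw [symmetrize, map_mul, rename_C, map_sum,
    ← Equiv.sum_comp (Equiv.mulLeft τ) (fun σ => rename (⇑σ) f)]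
  simp only [rename_rename]
  rfl

theorem isHomogeneous_symmetrize {m : ℕ} {f : MvPolynomial (Fin n) ℝ} (hf : f.IsHomogeneous m) :
    (symmetrize n f).IsHomogeneous m :=
  (IsHomogeneous.sum _ _ _ fun _ _ => hf.rename_isHomogeneous).C_mul _

theorem isSumSq_symmetrize_sq (f : MvPolynomial (Fin n) ℝ) : IsSumSq (symmetrize n (f ^ 2)) := by
  have hC : IsSumSq (C ((n.factorial : ℝ)⁻¹) : MvPolynomial (Fin n) ℝ) := by
    rw [← Real.mul_self_sqrt (by positivity : (0 : ℝ) ≤ (n.factorial : ℝ)⁻¹), map_mul]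
    exact IsSumSq.mul_self _
  simp only [symmetrize, map_pow]
  exact hC.mul (IsSumSq.sum_sq _ _)

end Symmetrize

/-- `ℓ` on `H^S_{n,2d}` is represented by an arbitrary linear extension to the whole
polynomial ring. -/
theorem dual_cone_iff_psd_general (n d : ℕ)
    (ℓ : MvPolynomial (Fin n) ℝ →ₗ[ℝ] ℝ) :
    (∀ g : MvPolynomial (Fin n) ℝ,
        g.IsSymmetric → g.IsHomogeneous (2 * d) → IsSumSq g → 0 ≤ ℓ g) ↔
    (∀ f : MvPolynomial (Fin n) ℝ,
        f.IsHomogeneous d → 0 ≤ ℓ (symmetrize n (f ^ 2))) := by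
  constructor
  · intro h f hf
    have hf2 : (f ^ 2).IsHomogeneous (2 * d) := mul_comm d 2 ▸ hf.pow 2
    exact h _ (isSymmetric_symmetrize _) (isHomogeneous_symmetrize hf2) (isSumSq_symmetrize_sq f)
  · intro h g hsym hhom hsos
    obtain ⟨k, f, rfl⟩ := hsos.exists_fin_sum_mul_self
    have hf := isHomogeneous_of_sum_mul_self hhom
    rw [← symmetrize_of_isSymmetric hsym, symmetrize_sum, map_sum]
    exact Finset.sum_nonneg fun i hi => by simpa only [sq] using h (f i) (hf i hi)

/-- A linear functional `ℓ` (on `H^S_{n,2d}`, represented here by an arbitrary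
linear extension to the polynomial ring) is nonnegative on all symmetric
degree-`2d` sums of squares iff the quadratic form `f ↦ ℓ(Sym_n(f²))` is
positive semidefinite on the forms of degree `d`. -/
theorem dual_cone_iff_psd (n d : ℕ) (hn : 2 * d ≤ n)
    (ℓ : MvPolynomial (Fin n) ℝ →ₗ[ℝ] ℝ) :
    (∀ g : MvPolynomial (Fin n) ℝ,
        g.IsSymmetric → g.IsHomogeneous (2 * d) → IsSumSq g → 0 ≤ ℓ g) ↔
    (∀ f : MvPolynomial (Fin n) ℝ,
        f.IsHomogeneous d → 0 ≤ ℓ (symmetrize n (f ^ 2))) :=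
  dual_cone_iff_psd_general n d ℓ
end
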